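/- arXiv:2406.04757 — 9 statements merged into one kernel-verified Lean document; each statement's English description precedes it below -/
import Mathlib

section
/- For every integer k with 1 ≤ k < n(q-1), the dimension of C_{n,k}^q is strictly less than the dimension of C_{n,k+1}^q. -/
/-!
Over a field with `q` elements, `x ^ (e + (q - 1)) = x ^ e` whenever `e ≥ 1`. Hence every monomial
of degree `k ≥ 1` agrees, as a function on the standard representatives, with one whose exponents
after the leading nonzero one are all `≤ q - 1`: move multiples of `q - 1` onto the leading
exponent. These reduced monomials are linearly independent. On the stratum of points
`(0, …, 0, 1, w)` with the `1` in position `i`, those with leading index `< i` vanish, those with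
leading index `i` become distinct reduced monomials in `w`, and those with leading index `> i`
have zero coefficient by downward induction on `i`. So `dim C_{n,k}` is the number of reduced
exponent vectors of degree `k`. Raising the leading exponent by one injects the degree-`k`
vectors into the degree-`(k + 1)` ones, and misses `(1, t)` for any `t` with entries `≤ q - 1`
summing to `k`, which exists as long as `k ≤ n (q - 1)`.
-/

open scoped BigOperators

/-- A vector in `F^(n+1)` is a standard representative if its leftmost nonzero
coordinate equals `1`. -/
def IsStdRep {F : Type*} [Field F] {n : ℕ} (v : Fin (n + 1) → F) : Prop :=
  ∃ i, (∀ j, j < i → v j = 0) ∧ v i = 1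

/-- The set of standard affine representatives of the points of projective n-space. -/
abbrev ProjPts (F : Type*) [Field F] (n : ℕ) : Type _ :=
  {v : Fin (n + 1) → F // IsStdRep v}

noncomputable instance {F : Type*} [Field F] [Fintype F] {n : ℕ} :
    Fintype (ProjPts F n) := Fintype.ofFinite _

/-- Evaluation of a polynomial at the standard representatives, as a linear map. -/
noncomputable def evalOnPts (F : Type*) [Field F] [Fintype F] (n : ℕ) :
    MvPolynomial (Fin (n + 1)) F →ₗ[F] (ProjPts F n → F) where
  toFun f := fun p => MvPolynomial.eval p.1 f
  map_add' f g := by ext p; simp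
  map_smul' c f := by ext p; simp [MvPolynomial.smul_eval]

/-- The projective Reed–Muller code `C_{n,k}^q`: evaluations of homogeneous degree-`k`
polynomials at the standard representatives of the points of `ℙ^n(F)`. -/
noncomputable def PRM (F : Type*) [Field F] [Fintype F] (n k : ℕ) :
    Submodule F (ProjPts F n → F) :=
  Submodule.map (evalOnPts F n) (MvPolynomial.homogeneousSubmodule (Fin (n + 1)) F k)

/-- The dual code with respect to the standard bilinear form. -/
noncomputable def dualCode {F : Type*} [Field F] [Fintype F] {n : ℕ}
    (C : Submodule F (ProjPts F n → F)) : Submodule F (ProjPts F n → F) where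
  carrier := {y | ∀ c ∈ C, ∑ p : ProjPts F n, y p * c p = 0}
  zero_mem' := by intro c hc; simp
  add_mem' := by
    intro a b ha hb c hc
    show ∑ p : ProjPts F n, (a + b) p * c p = 0
    simp only [Pi.add_apply, add_mul, Finset.sum_add_distrib, ha c hc, hb c hc, add_zero]
  smul_mem' := by
    intro r a ha c hc
    show ∑ p : ProjPts F n, (r • a) p * c p = 0
    simp only [Pi.smul_apply, smul_eq_mul, mul_assoc, ← Finset.mul_sum, ha c hc, mul_zero]

open MvPolynomial Finset

theorem FiniteField.pow_add_card_sub_one_mul {K : Type*} [Field K] [Fintype K] (x : K) {a : ℕ}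
    (ha : a ≠ 0) (m : ℕ) : x ^ (a + (Fintype.card K - 1) * m) = x ^ a := by
  rcases eq_or_ne x 0 with rfl | hx
  · rw [zero_pow ha, zero_pow (by omega)]
  · rw [pow_add, pow_mul, FiniteField.pow_card_sub_one_eq_one x hx, one_pow, mul_one]

section RestrictDegree

variable {K : Type*} [Field K] [Fintype K]

/-- `MvPolynomial.eq_zero_of_eval_eq_zero` needs `σ` and `K` in the same universe, so we pass
through `ULift σ`. -/
theorem MvPolynomial.eq_zero_of_eval_eq_zero' {σ : Type} [Finite σ] (p : MvPolynomial σ K)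
    (h : ∀ v : σ → K, eval v p = 0) (hp : p ∈ restrictDegree σ K (Fintype.card K - 1)) :
    p = 0 := by
  classical
  have hup : Function.Injective (ULift.up : σ → ULift σ) := ULift.up_injective
  refine rename_injective _ hup ?_
  rw [map_zero]
  refine eq_zero_of_eval_eq_zero _ _ _ (fun v => by rw [eval_rename]; exact h _) ?_
  rw [mem_restrictDegree] at hp ⊢
  intro s hs j
  rw [support_rename_of_injective hup] at hs
  obtain ⟨t, ht, rfl⟩ := Finset.mem_image.mp hs
  rw [show j = ULift.up j.down from rfl, Finsupp.mapDomain_apply hup]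
  exact hp t ht j.down

theorem eq_zero_of_sum_mul_prod_pow_eq_zero {ι : Type*} {σ : Type} [Fintype σ] {T : Finset ι}
    {e : ι → σ → ℕ} (he : Set.InjOn e T) (hle : ∀ a ∈ T, ∀ j, e a j ≤ Fintype.card K - 1)
    {g : ι → K} (h : ∀ w : σ → K, ∑ a ∈ T, g a * ∏ j, w j ^ e a j = 0) : ∀ a ∈ T, g a = 0 := by
  classical
  let mono : ι → σ →₀ ℕ := fun a => Finsupp.equivFunOnFinite.symm (e a)
  have hQ : ∑ a ∈ T, monomial (mono a) (g a) = 0 := by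
    refine eq_zero_of_eval_eq_zero' _ (fun w => ?_) (Submodule.sum_mem _ fun a ha => ?_)
    · simpa [mono, eval_monomial, Finsupp.prod_pow] using h w
    · rw [mem_restrictDegree]
      intro s hs j
      rw [Finset.mem_singleton.mp (support_monomial_subset hs)]
      exact hle a ha j
  intro a ha
  have := congrArg (coeff (mono a)) hQ
  rwa [coeff_sum, sum_eq_single_of_mem a ha, coeff_monomial, if_pos rfl, coeff_zero] at this
  intro b hb hba
  rw [coeff_monomial, if_neg]
  exact fun hab => hba (he hb ha (Finsupp.equivFunOnFinite.symm.injective hab))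

end RestrictDegree

theorem Nat.exists_eq_add_mul_of_pos (c e : ℕ) (hc : 0 < c) :
    ∃ t m, e = t + c * m ∧ t ≤ c ∧ (t = 0 → e = 0) := by
  rcases e with _ | e
  · exact ⟨0, 0, rfl, Nat.zero_le _, fun _ => rfl⟩
  · refine ⟨e % c + 1, e / c, ?_, Nat.mod_lt e hc, fun h => absurd h (Nat.succ_ne_zero _)⟩
    have := Nat.div_add_mod e c
    omega

theorem exists_fin_sum_eq_of_le_mul {n c k : ℕ} (h : k ≤ n * c) :
    ∃ t : Fin n → ℕ, (∀ j, t j ≤ c) ∧ ∑ j, t j = k := by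
  induction n generalizing k with
  | zero => exact ⟨0, fun j => j.elim0, by simp at h; simp [h]⟩
  | succ n ih =>
    obtain ⟨t, htc, hts⟩ := ih (k := k - min c k) (by rw [Nat.succ_mul] at h; omega)
    refine ⟨Fin.cons (min c k) t, fun j => Fin.cases (min_le_left c k) htc j, ?_⟩
    rw [Fin.sum_univ_succ, Fin.cons_zero]
    simp only [Fin.cons_succ, hts]
    omega

namespace ProjectiveReedMuller

section ExponentVectors

variable {ι : Type*} [LinearOrder ι]

def IsLead (a : ι → ℕ) (i : ι) : Prop :=
  (∀ j < i, a j = 0) ∧ a i ≠ 0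

def tail (i : ι) (a : ι → ℕ) : ι → ℕ :=
  fun j => if i < j then a j else 0

def IsReducedExp (q : ℕ) (a : ι → ℕ) : Prop :=
  ∀ i j, i < j → a i ≠ 0 → a j ≤ q - 1

theorem exists_isLead [WellFoundedLT ι] {a : ι → ℕ} (ha : a ≠ 0) : ∃ i, IsLead a i := by
  obtain ⟨j, hj⟩ := Function.ne_iff.mp ha
  obtain ⟨i, hi, hmin⟩ := wellFounded_lt.has_min {j | a j ≠ 0} ⟨j, hj⟩
  exact ⟨i, fun j hji => by_contra fun hj => hmin j hj hji, hi⟩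

theorem IsLead.unique {a : ι → ℕ} {i i' : ι} (h : IsLead a i) (h' : IsLead a i') : i = i' := by
  rcases lt_trichotomy i i' with hlt | heq | hgt
  · exact absurd (h'.1 i hlt) h.2
  · exact heq
  · exact absurd (h.1 i' hgt) h'.2

theorem IsLead.add_single {a : ι → ℕ} {i : ι} (h : IsLead a i) (m : ℕ) :
    IsLead (a + Pi.single i m) i :=
  ⟨fun j hj => by simp [h.1 j hj, hj.ne], by simp [h.2]⟩

theorem IsLead.eq_tail_add_single {a : ι → ℕ} {i : ι} (h : IsLead a i) :
    a = tail i a + Pi.single i (a i) := by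
  ext j
  rcases lt_trichotomy j i with hj | rfl | hj
  · simp [tail, h.1 j hj, hj.ne, hj.not_gt]
  · simp [tail]
  · simp [tail, hj, hj.ne']

theorem IsLead.sum_eq [Fintype ι] {a : ι → ℕ} {i : ι} (h : IsLead a i) :
    ∑ j, a j = ∑ j, tail i a j + a i := by
  conv_lhs => rw [h.eq_tail_add_single]
  simp [sum_add_distrib]

theorem IsLead.eq_of_tail_eq [Fintype ι] {a a' : ι → ℕ} {i : ι} (h : IsLead a i)
    (h' : IsLead a' i) (hsum : ∑ j, a j = ∑ j, a' j) (htail : tail i a = tail i a') : a = a' := by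
  have hi : a i = a' i := by
    rw [h.sum_eq, h'.sum_eq, htail] at hsum
    omega
  rw [h.eq_tail_add_single, h'.eq_tail_add_single, htail, hi]

theorem IsReducedExp.tail_le {q : ℕ} {a : ι → ℕ} {i : ι} (h : IsReducedExp q a) (hi : a i ≠ 0)
    (j : ι) : tail i a j ≤ q - 1 := by
  unfold tail
  split_ifs with hij
  exacts [h i j hij hi, Nat.zero_le _]

theorem IsReducedExp.add_single {q : ℕ} {a : ι → ℕ} {i : ι} (h : IsReducedExp q a)
    (hi : IsLead a i) (m : ℕ) : IsReducedExp q (a + Pi.single i m) := by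
  intro j l hjl hj
  have hij : i ≤ j := by
    by_contra! hji
    simp [hi.1 j hji, hji.ne] at hj
  have hil := hij.trans_lt hjl
  simpa [hil.ne'] using h i l hil hi.2

theorem exists_isReducedExp_prod_pow_eq {K : Type*} [Field K] [Fintype K] [Fintype ι]
    [WellFoundedLT ι] {s : ι → ℕ} (hs : s ≠ 0) :
    ∃ r : ι → ℕ, IsReducedExp (Fintype.card K) r ∧ ∑ j, r j = ∑ j, s j ∧
      ∀ x : ι → K, ∏ j, x j ^ r j = ∏ j, x j ^ s j := by
  obtain ⟨i, hi⟩ := exists_isLead hs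
  set c := Fintype.card K - 1
  have hc : 0 < c := Nat.sub_pos_of_lt Fintype.one_lt_card
  choose t m ht using fun j => Nat.exists_eq_add_mul_of_pos c (s j) hc
  set M := ∑ j, tail i m j
  refine ⟨tail i t + Pi.single i (s i + c * M), ?_, ?_, fun x => prod_congr rfl fun j _ => ?_⟩
  · intro j l hjl hj
    have hij : i < l := by
      rcases lt_or_ge j i with hji | hij
      · simp [tail, hji.not_gt, hji.ne] at hj
      · exact hij.trans_lt hjl
    simpa [tail, hij, hij.ne'] using (ht l).2.1
  · have htail : ∀ j, tail i s j = tail i t j + c * tail i m j := by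
      intro j
      unfold tail
      split_ifs
      exacts [(ht j).1, rfl]
    rw [hi.sum_eq]
    simp only [Pi.add_apply, sum_add_distrib, htail, mul_sum, Finset.sum_pi_single',
      mem_univ, if_true, M]
    ring
  · rcases lt_trichotomy j i with hj | rfl | hj
    · simp [tail, hj.not_gt, hj.ne, hi.1 j hj]
    · simpa [tail] using FiniteField.pow_add_card_sub_one_mul (x j) hi.2 M
    · obtain ⟨hs, -, h0⟩ := ht j
      simp only [Pi.add_apply, tail, if_pos hj, Pi.single_apply, if_neg hj.ne', add_zero]
      by_cases htj : t j = 0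
      · rw [htj, h0 htj]
      · rw [hs, FiniteField.pow_add_card_sub_one_mul (x j) htj]

end ExponentVectors

section ProjectiveSpace

variable {F : Type*} [Field F] {n : ℕ}

open Classical in
noncomputable def reducedExps (q n d : ℕ) : Finset (Fin (n + 1) → ℕ) :=
  (Nat.antidiagonalTuple (n + 1) d).filter (IsReducedExp q)

theorem mem_reducedExps {q d : ℕ} {a : Fin (n + 1) → ℕ} :
    a ∈ reducedExps q n d ↔ ∑ j, a j = d ∧ IsReducedExp q a := by
  simp [reducedExps, Nat.mem_antidiagonalTuple]

theorem exists_isLead_of_mem_reducedExps {q d : ℕ} {a : Fin (n + 1) → ℕ}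
    (ha : a ∈ reducedExps q n d) (hd : d ≠ 0) : ∃ i, IsLead a i :=
  exists_isLead fun h0 => hd (by simpa [h0] using (mem_reducedExps.mp ha).1.symm)

theorem cons_one_mem_reducedExps {q k : ℕ} {t : Fin n → ℕ} (htq : ∀ j, t j ≤ q - 1)
    (htk : ∑ j, t j = k) : Fin.cons 1 t ∈ reducedExps q n (k + 1) := by
  refine mem_reducedExps.mpr ⟨by simp [Fin.sum_univ_succ, htk, add_comm], fun j l hjl _ => ?_⟩
  cases l using Fin.cases with
  | zero => exact absurd hjl (Fin.not_lt_zero j)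
  | succ l => simpa using htq l

variable (F) in
def monomialFun (a : Fin (n + 1) → ℕ) : ProjPts F n → F :=
  fun p => ∏ j, p.1 j ^ a j

theorem evalOnPts_monomial [Fintype F] (s : Fin (n + 1) →₀ ℕ) :
    evalOnPts F n (monomial s 1) = monomialFun F s := by
  ext p
  simp [evalOnPts, monomialFun, eval_monomial, Finsupp.prod_fintype]

def stratumPt (i : Fin (n + 1)) (w : Fin (n + 1) → F) : ProjPts F n :=
  ⟨fun j => if j < i then 0 else if j = i then 1 else w j, i, fun _ hj => if_pos hj, by simp⟩

theorem monomialFun_stratumPt_of_lt {a : Fin (n + 1) → ℕ} {i j : Fin (n + 1)} (hji : j < i)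
    (ha : a j ≠ 0) (w : Fin (n + 1) → F) : monomialFun F a (stratumPt i w) = 0 :=
  prod_eq_zero (mem_univ j) (by simp [stratumPt, hji, ha])

theorem monomialFun_stratumPt {a : Fin (n + 1) → ℕ} {i : Fin (n + 1)} (ha : ∀ j < i, a j = 0)
    (w : Fin (n + 1) → F) : monomialFun F a (stratumPt i w) = ∏ j, w j ^ tail i a j := by
  refine prod_congr rfl fun j _ => ?_
  rcases lt_trichotomy j i with hj | rfl | hj
  · simp [stratumPt, tail, hj, hj.not_gt, ha j hj]
  · simp [stratumPt, tail]
  · simp [stratumPt, tail, hj, hj.not_gt, hj.ne']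

end ProjectiveSpace

section Dimension

variable {F : Type*} [Field F] [Fintype F] {n : ℕ}

theorem linearIndependent_monomialFun {d : ℕ} (hd : d ≠ 0) :
    LinearIndependent F fun a : reducedExps (Fintype.card F) n d => monomialFun F a.1 := by
  classical
  rw [Fintype.linearIndependent_iff]
  intro g hg
  have hlead (a : reducedExps (Fintype.card F) n d) : ∃ i, IsLead a.1 i :=
    exists_isLead_of_mem_reducedExps a.2 hd
  suffices key : ∀ i, ∀ a : reducedExps (Fintype.card F) n d, IsLead a.1 i → g a = 0 by
    intro a
    obtain ⟨i, hi⟩ := hlead a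
    exact key i a hi
  intro i
  induction i using WellFoundedGT.induction with
  | _ i IH =>
  let T := univ.filter fun a : reducedExps (Fintype.card F) n d => IsLead a.1 i
  have hT : ∀ w : Fin (n + 1) → F, ∑ a ∈ T, g a * ∏ j, w j ^ tail i a.1 j = 0 := by
    intro w
    have hw := congrFun hg (stratumPt i w)
    simp only [Finset.sum_apply, Pi.smul_apply, smul_eq_mul, Pi.zero_apply] at hw
    rw [← hw, sum_filter]
    refine sum_congr rfl fun a _ => ?_
    obtain ⟨j, hj⟩ := hlead a
    split_ifs with hi
    · rw [monomialFun_stratumPt hi.1]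
    rcases lt_or_gt_of_ne (fun hji : j = i => hi (hji ▸ hj)) with hji | hij
    · rw [monomialFun_stratumPt_of_lt hji hj.2, mul_zero]
    · rw [IH j hij a hj, zero_mul]
  have hinj : Set.InjOn (fun a : reducedExps (Fintype.card F) n d => tail i a.1) T := by
    intro a ha a' ha' htail
    simp only [coe_filter, T, mem_univ, true_and, Set.mem_ofPred_eq] at ha ha'
    exact Subtype.ext (ha.eq_of_tail_eq ha'
      ((mem_reducedExps.mp a.2).1.trans (mem_reducedExps.mp a'.2).1.symm) htail)
  have hle : ∀ a ∈ T, ∀ j, tail i a.1 j ≤ Fintype.card F - 1 := fun a ha =>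
    (mem_reducedExps.mp a.2).2.tail_le (mem_filter.mp ha).2.2
  intro a ha
  exact eq_zero_of_sum_mul_prod_pow_eq_zero hinj hle hT a (by simp [T, ha])

theorem PRM_eq_span {k : ℕ} (hk : k ≠ 0) :
    PRM F n k = Submodule.span F
      (Set.range fun a : reducedExps (Fintype.card F) n k => monomialFun F a.1) := by
  apply le_antisymm
  · rw [PRM, homogeneousSubmodule_eq_finsupp_supported, AddMonoidAlgebra.supported_eq_span_single,
      Submodule.map_span, ← Set.image_comp, Submodule.span_le]
    rintro _ ⟨s, hs, rfl⟩
    rw [Set.mem_ofPred_eq, Finsupp.degree_eq_sum] at hs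
    have hs0 : (s : Fin (n + 1) → ℕ) ≠ 0 := fun h => hk (by simp [← hs, h])
    obtain ⟨r, hr, hsum, hprod⟩ := exists_isReducedExp_prod_pow_eq (K := F) hs0
    refine Submodule.subset_span ⟨⟨r, mem_reducedExps.mpr ⟨hsum.trans hs, hr⟩⟩, funext fun p => ?_⟩
    rw [Function.comp_apply, single_eq_monomial, evalOnPts_monomial]
    exact hprod p.1
  · rw [Submodule.span_le]
    rintro _ ⟨a, rfl⟩
    refine ⟨monomial (Finsupp.equivFunOnFinite.symm a.1) 1, ?_, ?_⟩
    · exact isHomogeneous_monomial _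
        (by simpa [Finsupp.degree_eq_sum] using (mem_reducedExps.mp a.2).1)
    · simpa using evalOnPts_monomial (F := F) (Finsupp.equivFunOnFinite.symm a.1)

theorem finrank_PRM {k : ℕ} (hk : k ≠ 0) :
    Module.finrank F (PRM F n k) = (reducedExps (Fintype.card F) n k).card := by
  rw [PRM_eq_span hk, finrank_span_eq_card (linearIndependent_monomialFun hk), Fintype.card_coe]

end Dimension

theorem card_reducedExps_lt {n q k : ℕ} (hk : k ≠ 0) (hkn : k ≤ n * (q - 1)) :
    (reducedExps q n k).card < (reducedExps q n (k + 1)).card := by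
  classical
  choose! lead hlead using fun a (ha : a ∈ reducedExps q n k) =>
    exists_isLead_of_mem_reducedExps ha hk
  let bump : (Fin (n + 1) → ℕ) → (Fin (n + 1) → ℕ) := fun a => a + Pi.single (lead a) 1
  have bump_mem : ∀ a ∈ reducedExps q n k, bump a ∈ reducedExps q n (k + 1) := fun a ha =>
    have ⟨hsum, hred⟩ := mem_reducedExps.mp ha
    mem_reducedExps.mpr ⟨by simp [bump, sum_add_distrib, hsum], hred.add_single (hlead a ha) 1⟩
  have bump_injOn : Set.InjOn bump (reducedExps q n k) := by
    intro a ha a' ha' h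
    have h' : IsLead (bump a) (lead a') := h ▸ (hlead a' ha').add_single 1
    have hi : lead a = lead a' := ((hlead a ha).add_single 1).unique h'
    simpa [bump, hi] using h
  obtain ⟨t, htq, htk⟩ := exists_fin_sum_eq_of_le_mul hkn
  have hb_not : Fin.cons 1 t ∉ (reducedExps q n k).image bump := by
    simp only [mem_image, not_exists, not_and]
    intro a ha hab
    have hb : IsLead (bump a) 0 := hab ▸ ⟨fun j hj => absurd hj (Fin.not_lt_zero j), by simp⟩
    have h0 : lead a = 0 := ((hlead a ha).add_single 1).unique hb
    have := congrFun hab 0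
    simp [bump, h0] at this
    exact (hlead a ha).2 (h0 ▸ this)
  calc (reducedExps q n k).card = ((reducedExps q n k).image bump).card :=
        (card_image_of_injOn bump_injOn).symm
    _ < (reducedExps q n (k + 1)).card :=
        card_lt_card <| (ssubset_iff_of_subset (image_subset_iff.mpr bump_mem)).mpr
          ⟨_, cons_one_mem_reducedExps htq htk, hb_not⟩

end ProjectiveReedMuller

theorem stmt3_general (q n : ℕ) (F : Type*) [Field F] [Fintype F]
    (hq : Fintype.card F = q) (k : ℕ) (hk1 : 1 ≤ k) (hk2 : k < n * (q - 1)) :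
    Module.finrank F (PRM F n k) < Module.finrank F (PRM F n (k + 1)) := by
  subst hq
  rw [ProjectiveReedMuller.finrank_PRM (by omega), ProjectiveReedMuller.finrank_PRM (by omega)]
  exact ProjectiveReedMuller.card_reducedExps_lt (by omega) hk2.le

theorem stmt3 (q n : ℕ) (F : Type*) [Field F] [Fintype F] [DecidableEq F]
    (hq : Fintype.card F = q) (hn : 1 ≤ n) (k : ℕ) (hk1 : 1 ≤ k) (hk2 : k < n * (q - 1)) :
    Module.finrank F (PRM F n k) < Module.finrank F (PRM F n (k + 1)) :=
  stmt3_general q n F hq k hk1 hk2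
end

section
/- Suppose a and b are integers satisfying 1 ≤ a < b ≤ n(q-1). Then dim(C_{n,b}^q) − dim(C_{n,a}^q) ≥ b − a. -/
open scoped BigOperators

namespace PRMaux

variable {q m : ℕ}

/-- total degree of a reduced exponent vector -/
def pdeg (g : Fin m → Fin q) : ℕ := ∑ i, (g i : ℕ)

open Classical in
/-- reduced exponent vectors in the class of `k` -/
noncomputable def Mset (q m k : ℕ) : Finset (Fin m → Fin q) :=
  Finset.univ.filter
    (fun g => (∃ i, (g i : ℕ) ≠ 0) ∧ pdeg g ≤ k ∧ pdeg g % (q - 1) = k % (q - 1))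

open Classical in
lemma mem_Mset {k : ℕ} {g : Fin m → Fin q} :
    g ∈ Mset q m k ↔ (∃ i, (g i : ℕ) ≠ 0) ∧ pdeg g ≤ k ∧ pdeg g % (q - 1) = k % (q - 1) := by
  simp [Mset]

/-- the leading (least) index with nonzero entry -/
noncomputable def leadIdx (g : Fin (m + 1) → Fin q) (h : ∃ i, (g i : ℕ) ≠ 0) : Fin (m + 1) :=
  (Finset.univ.filter (fun i => (g i : ℕ) ≠ 0)).min'
    (by obtain ⟨i, hi⟩ := h; exact ⟨i, by simp [hi]⟩)

lemma leadIdx_nonzero (g : Fin (m + 1) → Fin q) (h : ∃ i, (g i : ℕ) ≠ 0) :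
    (g (leadIdx g h) : ℕ) ≠ 0 := by
  have := Finset.min'_mem (Finset.univ.filter (fun i => (g i : ℕ) ≠ 0))
    (by obtain ⟨i, hi⟩ := h; exact ⟨i, by simp [hi]⟩)
  simpa [leadIdx] using this

lemma leadIdx_eq_zero_of_lt (g : Fin (m + 1) → Fin q) (h : ∃ i, (g i : ℕ) ≠ 0)
    {j : Fin (m + 1)} (hj : j < leadIdx g h) : (g j : ℕ) = 0 := by
  by_contra hz
  have hmem : j ∈ Finset.univ.filter (fun i => (g i : ℕ) ≠ 0) := by simp [hz]
  exact absurd (Finset.min'_le _ j hmem) (not_le.mpr hj)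

lemma leadIdx_eq (g : Fin (m + 1) → Fin q) (h : ∃ i, (g i : ℕ) ≠ 0) {i : Fin (m + 1)}
    (hi : (g i : ℕ) ≠ 0) (hlt : ∀ j, j < i → (g j : ℕ) = 0) : leadIdx g h = i := by
  have h1 : leadIdx g h ≤ i := Finset.min'_le _ i (by simp [hi])
  rcases lt_or_eq_of_le h1 with h2 | h2
  · exact absurd (hlt _ h2) (leadIdx_nonzero g h)
  · exact h2

/-- the cyclic increment on nonzero residues -/
def cyc (hq : 2 ≤ q) (x : Fin q) : Fin q :=
  if h : (x : ℕ) = q - 1 then ⟨1, by omega⟩ else ⟨(x : ℕ) + 1, by have := x.2; omega⟩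

lemma cyc_val_top (hq : 2 ≤ q) (x : Fin q) (h : (x : ℕ) = q - 1) : (cyc hq x : ℕ) = 1 := by
  rw [cyc, dif_pos h]

lemma cyc_val_low (hq : 2 ≤ q) (x : Fin q) (h : (x : ℕ) ≠ q - 1) :
    (cyc hq x : ℕ) = (x : ℕ) + 1 := by
  rw [cyc, dif_neg h]

lemma cyc_val_ne_zero (hq : 2 ≤ q) (x : Fin q) : (cyc hq x : ℕ) ≠ 0 := by
  by_cases h : (x : ℕ) = q - 1
  · rw [cyc_val_top hq x h]; omega
  · rw [cyc_val_low hq x h]; omega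

lemma cyc_inj (hq : 2 ≤ q) {x y : Fin q} (hx : (x : ℕ) ≠ 0) (hy : (y : ℕ) ≠ 0)
    (h : cyc hq x = cyc hq y) : x = y := by
  have hv : (cyc hq x : ℕ) = (cyc hq y : ℕ) := congrArg Fin.val h
  have hx2 := x.2; have hy2 := y.2
  apply Fin.ext
  by_cases h1 : (x : ℕ) = q - 1 <;> by_cases h2 : (y : ℕ) = q - 1
  · omega
  · rw [cyc_val_top hq x h1, cyc_val_low hq y h2] at hv; omega
  · rw [cyc_val_low hq x h1, cyc_val_top hq y h2] at hv; omega
  · rw [cyc_val_low hq x h1, cyc_val_low hq y h2] at hv; omega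

/-- the step map -/
noncomputable def step (hq : 2 ≤ q) (g : Fin (m + 1) → Fin q) : Fin (m + 1) → Fin q :=
  if h : ∃ i, (g i : ℕ) ≠ 0 then
    Function.update g (leadIdx g h) (cyc hq (g (leadIdx g h))) else g

lemma step_apply_lead (hq : 2 ≤ q) (g : Fin (m + 1) → Fin q) (h : ∃ i, (g i : ℕ) ≠ 0) :
    step hq g (leadIdx g h) = cyc hq (g (leadIdx g h)) := by
  rw [step, dif_pos h, Function.update_self]

lemma step_apply_ne (hq : 2 ≤ q) (g : Fin (m + 1) → Fin q) (h : ∃ i, (g i : ℕ) ≠ 0)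
    {j : Fin (m + 1)} (hj : j ≠ leadIdx g h) : step hq g j = g j := by
  rw [step, dif_pos h, Function.update_of_ne hj]

lemma step_nonzero (hq : 2 ≤ q) (g : Fin (m + 1) → Fin q) (h : ∃ i, (g i : ℕ) ≠ 0) :
    ∃ i, ((step hq g i : ℕ)) ≠ 0 :=
  ⟨leadIdx g h, by rw [step_apply_lead hq g h]; exact cyc_val_ne_zero hq _⟩

lemma leadIdx_step (hq : 2 ≤ q) (g : Fin (m + 1) → Fin q) (h : ∃ i, (g i : ℕ) ≠ 0)
    (h' : ∃ i, ((step hq g i : ℕ)) ≠ 0) :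
    leadIdx (step hq g) h' = leadIdx g h := by
  apply leadIdx_eq
  · rw [step_apply_lead hq g h]; exact cyc_val_ne_zero hq _
  · intro j hj
    rw [step_apply_ne hq g h (ne_of_lt hj)]
    exact leadIdx_eq_zero_of_lt g h hj

lemma pdeg_split (g : Fin (m + 1) → Fin q) (i : Fin (m + 1)) :
    pdeg g = (g i : ℕ) + ∑ j ∈ Finset.univ.erase i, (g j : ℕ) :=
  (Finset.add_sum_erase _ _ (Finset.mem_univ i)).symm

lemma pdeg_step_eq (hq : 2 ≤ q) (g : Fin (m + 1) → Fin q) (h : ∃ i, (g i : ℕ) ≠ 0) :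
    pdeg (step hq g) + (g (leadIdx g h) : ℕ) = pdeg g + (cyc hq (g (leadIdx g h)) : ℕ) := by
  have h1 := pdeg_split (step hq g) (leadIdx g h)
  have h2 := pdeg_split g (leadIdx g h)
  have h3 : ∑ j ∈ Finset.univ.erase (leadIdx g h), ((step hq g j : ℕ)) =
      ∑ j ∈ Finset.univ.erase (leadIdx g h), ((g j : ℕ)) := by
    refine Finset.sum_congr rfl (fun j hj => ?_)
    rw [step_apply_ne hq g h (Finset.ne_of_mem_erase hj)]
  rw [step_apply_lead hq g h] at h1
  omega

lemma pdeg_step_lower (hq : 2 ≤ q) (g : Fin (m + 1) → Fin q) (h : ∃ i, (g i : ℕ) ≠ 0)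
    (hlow : (g (leadIdx g h) : ℕ) ≠ q - 1) :
    pdeg (step hq g) = pdeg g + 1 := by
  have h0 := pdeg_step_eq hq g h
  rw [cyc_val_low hq _ hlow] at h0
  omega

lemma pdeg_step_top (hq : 2 ≤ q) (g : Fin (m + 1) → Fin q) (h : ∃ i, (g i : ℕ) ≠ 0)
    (htop : (g (leadIdx g h) : ℕ) = q - 1) :
    pdeg (step hq g) + (q - 1) = pdeg g + 1 := by
  have h0 := pdeg_step_eq hq g h
  rw [cyc_val_top hq _ htop] at h0
  omega

lemma succ_mod_eq {r x k : ℕ} (hmod : x % r = k % r) : (x + 1) % r = (k + 1) % r := by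
  rw [Nat.add_mod x, hmod, ← Nat.add_mod]

lemma step_mem_Mset (hq : 2 ≤ q) {k : ℕ} {g : Fin (m + 1) → Fin q} (hg : g ∈ Mset q (m + 1) k) :
    step hq g ∈ Mset q (m + 1) (k + 1) := by
  rw [mem_Mset] at hg ⊢
  obtain ⟨hne, hle, hmod⟩ := hg
  refine ⟨step_nonzero hq g hne, ?_, ?_⟩
  · by_cases hc : (g (leadIdx g hne) : ℕ) = q - 1
    · have h1 := pdeg_step_top hq g hne hc
      omega
    · have h1 := pdeg_step_lower hq g hne hc
      omega
  · by_cases hc : (g (leadIdx g hne) : ℕ) = q - 1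
    · have h1 := pdeg_step_top hq g hne hc
      calc pdeg (step hq g) % (q - 1) = (pdeg (step hq g) + (q - 1)) % (q - 1) := by
              rw [Nat.add_mod_right]
        _ = (pdeg g + 1) % (q - 1) := by rw [h1]
        _ = (k + 1) % (q - 1) := succ_mod_eq hmod
    · have h1 := pdeg_step_lower hq g hne hc
      rw [h1]
      exact succ_mod_eq hmod

lemma leadIdx_congr (g g' : Fin (m + 1) → Fin q) (h : ∃ i, (g i : ℕ) ≠ 0)
    (h' : ∃ i, (g' i : ℕ) ≠ 0) (e : g = g') : leadIdx g h = leadIdx g' h' := by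
  subst e; rfl

lemma step_inj (hq : 2 ≤ q) {g g' : Fin (m + 1) → Fin q} (h : ∃ i, (g i : ℕ) ≠ 0)
    (h' : ∃ i, (g' i : ℕ) ≠ 0) (he : step hq g = step hq g') : g = g' := by
  have hlead : leadIdx g h = leadIdx g' h' := by
    rw [← leadIdx_step hq g h (step_nonzero hq g h),
      ← leadIdx_step hq g' h' (step_nonzero hq g' h')]
    exact leadIdx_congr _ _ _ _ he
  funext j
  by_cases hj : j = leadIdx g h
  · subst hj
    have e1 : cyc hq (g (leadIdx g h)) = cyc hq (g' (leadIdx g h)) := by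
      rw [← step_apply_lead hq g h, he]
      conv_rhs => rw [hlead, ← step_apply_lead hq g' h']
      rw [← hlead]
    exact cyc_inj hq (leadIdx_nonzero g h) (by rw [hlead]; exact leadIdx_nonzero g' h') e1
  · have e1 : step hq g j = g j := step_apply_ne hq g h hj
    have e2 : step hq g' j = g' j := step_apply_ne hq g' h' (by rw [← hlead]; exact hj)
    rw [← e1, ← e2, he]

lemma exists_sum_eq (hq : 2 ≤ q) : ∀ (n d : ℕ), d ≤ n * (q - 1) →
    ∃ w : Fin n → Fin q, ∑ j, (w j : ℕ) = d := by
  intro n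
  induction n with
  | zero => intro d hd; simp at hd; exact ⟨fun j => j.elim0, by simp [hd]⟩
  | succ n ih =>
    intro d hd
    rw [Nat.succ_mul] at hd
    obtain ⟨w, hw⟩ := ih (d - min d (q - 1)) (by omega)
    refine ⟨Fin.cons ⟨min d (q - 1), by omega⟩ w, ?_⟩
    rw [Fin.sum_univ_succ]
    simp only [Fin.cons_zero, Fin.cons_succ]
    rw [hw]
    omega

lemma card_Mset_step (hq : 2 ≤ q) {n k : ℕ} (hk : k < n * (q - 1)) :
    (Mset q (n + 1) k).card + 1 ≤ (Mset q (n + 1) (k + 1)).card := by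
  classical
  obtain ⟨w, hw⟩ := exists_sum_eq hq n k (le_of_lt hk)
  set hsp : Fin (n + 1) → Fin q := Fin.cons ⟨1, by omega⟩ w with hhsp
  have hsp0 : (hsp 0 : ℕ) = 1 := by rw [hhsp]; simp
  have hsppdeg : pdeg hsp = k + 1 := by
    rw [pdeg, Fin.sum_univ_succ]
    simp only [hhsp, Fin.cons_zero, Fin.cons_succ]
    rw [hw]
    omega
  have hspmem : hsp ∈ Mset q (n + 1) (k + 1) :=
    mem_Mset.mpr ⟨⟨0, by rw [hsp0]; omega⟩, by rw [hsppdeg], by rw [hsppdeg]⟩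
  have himg : (Mset q (n + 1) k).image (step hq) ⊆ Mset q (n + 1) (k + 1) := by
    intro x hx
    obtain ⟨g, hg, rfl⟩ := Finset.mem_image.mp hx
    exact step_mem_Mset hq hg
  have hnotmem : hsp ∉ (Mset q (n + 1) k).image (step hq) := by
    intro hmem
    obtain ⟨g, hg, hstepg⟩ := Finset.mem_image.mp hmem
    obtain ⟨hne, hle, hmod⟩ := mem_Mset.mp hg
    have hi0 : leadIdx g hne = 0 := by
      by_contra hne0
      have h0lt : (0 : Fin (n + 1)) < leadIdx g hne :=
        lt_of_le_of_ne (Fin.zero_le _) (Ne.symm hne0)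
      have : (step hq g 0 : ℕ) = 0 := by
        rw [step_apply_ne hq g hne (ne_of_lt h0lt)]
        exact leadIdx_eq_zero_of_lt g hne h0lt
      rw [hstepg, hsp0] at this
      omega
    have hcyc1 : (cyc hq (g (leadIdx g hne)) : ℕ) = 1 := by
      rw [← step_apply_lead hq g hne, hstepg, hi0, hsp0]
    have hgtop : (g (leadIdx g hne) : ℕ) = q - 1 := by
      by_contra hc
      rw [cyc_val_low hq _ hc] at hcyc1
      exact leadIdx_nonzero g hne (by omega)
    have hp := pdeg_step_top hq g hne hgtop
    rw [hstepg, hsppdeg] at hp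
    omega
  have hsub : insert hsp ((Mset q (n + 1) k).image (step hq)) ⊆ Mset q (n + 1) (k + 1) :=
    Finset.insert_subset hspmem himg
  have hcard1 : ((Mset q (n + 1) k).image (step hq)).card = (Mset q (n + 1) k).card :=
    Finset.card_image_of_injOn (fun g hg g' hg' he =>
      step_inj hq (mem_Mset.mp hg).1 (mem_Mset.mp hg').1 he)
  calc (Mset q (n + 1) k).card + 1
      = (insert hsp ((Mset q (n + 1) k).image (step hq))).card := by
        rw [Finset.card_insert_of_notMem hnotmem, hcard1]
    _ ≤ (Mset q (n + 1) (k + 1)).card := Finset.card_le_card hsub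

lemma card_Mset_chain (hq : 2 ≤ q) {n a b : ℕ} (hab : a ≤ b) (hb : b ≤ n * (q - 1)) :
    (Mset q (n + 1) a).card + (b - a) ≤ (Mset q (n + 1) b).card := by
  induction b with
  | zero => have : a = 0 := by omega
            subst this; simp
  | succ b ih =>
    rcases Nat.lt_or_ge a (b + 1) with hlt | hge
    · have h1 := ih (by omega) (by omega)
      have h2 := card_Mset_step hq (n := n) (k := b) (by omega)
      omega
    · have : a = b + 1 := by omega
      subst this
      omega

/-! ### power reduction -/

def rho (q s : ℕ) : ℕ := if s = 0 then 0 else (s - 1) % (q - 1) + 1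

lemma rho_lt (hq : 2 ≤ q) (s : ℕ) : rho q s < q := by
  rw [rho]
  split
  · omega
  · have : (s - 1) % (q - 1) < q - 1 := Nat.mod_lt _ (by omega)
    omega

lemma rho_le (s : ℕ) : rho q s ≤ s := by
  rw [rho]
  split
  · omega
  · have : (s - 1) % (q - 1) ≤ s - 1 := Nat.mod_le _ _
    omega

lemma rho_eq_zero_iff (s : ℕ) : rho q s = 0 ↔ s = 0 := by
  rw [rho]; split <;> omega

lemma rho_mod (q s : ℕ) : rho q s % (q - 1) = s % (q - 1) := by
  rcases eq_or_ne s 0 with hs | hs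
  · subst hs; rfl
  · have hd := Nat.div_add_mod (s - 1) (q - 1)
    have hsplit : s = ((s - 1) % (q - 1) + 1) + (q - 1) * ((s - 1) / (q - 1)) := by omega
    rw [rho, if_neg hs]
    conv_rhs => rw [hsplit]
    rw [Nat.add_mul_mod_self_left]

section Field

variable {F : Type*} [Field F] [Fintype F]

lemma pow_reduce {q : ℕ} (hq : Fintype.card F = q) (v : F) {s t : ℕ}
    (hmod : s % (q - 1) = t % (q - 1)) (hz : s = 0 ↔ t = 0) : v ^ s = v ^ t := by
  rcases eq_or_ne s 0 with hs | hs
  · rw [hs, (hz.mp hs)]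
  · have ht : t ≠ 0 := fun h => hs (hz.mpr h)
    rcases eq_or_ne v 0 with hv | hv
    · rw [hv, zero_pow hs, zero_pow ht]
    · have h1 : v ^ (q - 1) = 1 := by
        rw [← hq]; exact FiniteField.pow_card_sub_one_eq_one v hv
      rw [pow_eq_pow_mod s h1, pow_eq_pow_mod t h1, hmod]

end Field

/-! ### exponent vectors and monomials -/

noncomputable def toExp (g : Fin m → Fin q) : Fin m →₀ ℕ :=
  Finsupp.equivFunOnFinite.symm (fun i => (g i : ℕ))

lemma toExp_apply (g : Fin m → Fin q) (i : Fin m) : toExp g i = (g i : ℕ) := rfl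

lemma toExp_inj {g g' : Fin m → Fin q} (h : toExp g = toExp g') : g = g' := by
  funext i
  apply Fin.ext
  have := congrArg (fun f => Finsupp.equivFunOnFinite f i) h
  simpa [toExp] using this

lemma toExp_ne_zero {g : Fin m → Fin q} (h : ∃ i, (g i : ℕ) ≠ 0) : toExp g ≠ 0 := by
  obtain ⟨i, hi⟩ := h
  intro hz
  apply hi
  rw [← toExp_apply, hz]
  rfl

lemma degree_eq_sum_univ {m : ℕ} (e : Fin m →₀ ℕ) : e.degree = ∑ i, e i := by
  rw [Finsupp.degree]
  exact Finset.sum_subset (Finset.subset_univ _)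
    (fun i _ hni => Finsupp.notMem_support_iff.mp hni)

lemma degree_toExp (g : Fin m → Fin q) : (toExp g).degree = pdeg g := by
  rw [degree_eq_sum_univ, pdeg]
  rfl

lemma pdeg_pos {k : ℕ} {g : Fin m → Fin q} (hg : g ∈ Mset q m k) : 1 ≤ pdeg g := by
  obtain ⟨⟨i, hi⟩, -, -⟩ := mem_Mset.mp hg
  calc 1 ≤ (g i : ℕ) := by omega
    _ ≤ pdeg g := Finset.single_le_sum (f := fun j => ((g j : ℕ)))
        (fun j _ => Nat.zero_le _) (Finset.mem_univ i)

section Eval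

open MvPolynomial

variable {F : Type*} [Field F] [Fintype F] [DecidableEq F] {n : ℕ}

lemma evalOnPts_apply (f : MvPolynomial (Fin (n + 1)) F) (p : ProjPts F n) :
    evalOnPts F n f p = MvPolynomial.eval p.1 f := rfl

lemma eval_monomial_prod (w : Fin (n + 1) → F) (e : Fin (n + 1) →₀ ℕ) (c : F) :
    MvPolynomial.eval w (monomial e c) = c * ∏ i, (w i) ^ (e i) := by
  rw [MvPolynomial.eval_monomial]
  congr 1
  exact Finsupp.prod_fintype _ _ (fun i => pow_zero _)

lemma finrank_PRM_le (q : ℕ) (hq : Fintype.card F = q) (hq2 : 2 ≤ q) (a : ℕ) (ha : 1 ≤ a) :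
    Module.finrank F (PRM F n a) ≤ (Mset q (n + 1) a).card := by
  classical
  set T : Finset (ProjPts F n → F) :=
    (Mset q (n + 1) a).image (fun g => evalOnPts F n (monomial (toExp g) 1)) with hT
  have hle : PRM F n a ≤ Submodule.span F (T : Set (ProjPts F n → F)) := by
    rintro x ⟨f, hf, rfl⟩
    have hf' : MvPolynomial.IsHomogeneous f a := hf
    rw [← support_sum_monomial_coeff f, map_sum]
    refine Submodule.sum_mem _ (fun e he => ?_)
    have hdeg : ∑ i, e i = a := by
      rw [← degree_eq_sum_univ, Finsupp.degree_eq_weight_one]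
      exact hf' (mem_support_iff.mp he)
    set g : Fin (n + 1) → Fin q := fun i => ⟨rho q (e i), rho_lt hq2 _⟩ with hgdef
    have hge : ∀ i, (g i : ℕ) = rho q (e i) := fun i => rfl
    have hpdeg : pdeg g = ∑ i, rho q (e i) := by
      rw [pdeg]
    have hmem : g ∈ Mset q (n + 1) a := by
      rw [mem_Mset]
      refine ⟨?_, ?_, ?_⟩
      · have hex : ∃ i, e i ≠ 0 := by
          by_contra hc
          push_neg at hc
          rw [Finset.sum_congr rfl (fun i _ => hc i), Finset.sum_const_zero] at hdeg
          omega
        obtain ⟨i, hi⟩ := hex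
        exact ⟨i, by rw [hge, Ne, rho_eq_zero_iff]; exact hi⟩
      · rw [hpdeg, ← hdeg]
        exact Finset.sum_le_sum (fun i _ => rho_le _)
      · calc pdeg g % (q - 1)
            = (∑ i, rho q (e i) % (q - 1)) % (q - 1) := by
              rw [hpdeg, Finset.sum_nat_mod]
          _ = (∑ i, e i % (q - 1)) % (q - 1) := by
              rw [Finset.sum_congr rfl (fun i _ => rho_mod q (e i))]
          _ = (∑ i, e i) % (q - 1) := by rw [← Finset.sum_nat_mod]
          _ = a % (q - 1) := by rw [hdeg]
    have hfun : evalOnPts F n (monomial e (coeff e f)) =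
        coeff e f • evalOnPts F n (monomial (toExp g) 1) := by
      funext p
      rw [Pi.smul_apply, evalOnPts_apply, evalOnPts_apply, eval_monomial_prod,
        eval_monomial_prod, smul_eq_mul, one_mul]
      congr 1
      refine Finset.prod_congr rfl (fun i _ => ?_)
      refine pow_reduce hq _ ?_ ?_
      · rw [toExp_apply, hge, rho_mod]
      · rw [toExp_apply, hge, rho_eq_zero_iff]
    rw [hfun]
    refine Submodule.smul_mem _ _ (Submodule.subset_span ?_)
    exact Finset.mem_coe.mpr (Finset.mem_image_of_mem _ hmem)
  have h1 : Module.finrank F (PRM F n a) ≤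
      Module.finrank F (Submodule.span F (T : Set (ProjPts F n → F))) :=
    Submodule.finrank_mono hle
  have h2 := finrank_span_finset_le_card (R := F) T
  rw [Set.finrank] at h2
  have h3 : T.card ≤ (Mset q (n + 1) a).card := Finset.card_image_le
  omega

lemma monomial_mem_PRM (q : ℕ) (hq : Fintype.card F = q) (hq2 : 2 ≤ q) (b : ℕ)
    {g : Fin (n + 1) → Fin q} (hg : g ∈ Mset q (n + 1) b) :
    evalOnPts F n (MvPolynomial.monomial (toExp g) (1 : F)) ∈ PRM F n b := by
  classical
  obtain ⟨hne, hle, hmod⟩ := mem_Mset.mp hg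
  set i0 := leadIdx g hne with hi0
  set e' : Fin (n + 1) →₀ ℕ := toExp g + Finsupp.single i0 (b - pdeg g) with he'
  have hsing : ∀ i, (Finsupp.single i0 (b - pdeg g)) i = if i = i0 then b - pdeg g else 0 := by
    intro i
    rw [Finsupp.single_apply]
    by_cases hii : i = i0
    · rw [if_pos hii.symm, if_pos hii]
    · rw [if_neg (fun h => hii h.symm), if_neg hii]
  have hdeg : ∑ i, e' i = b := by
    rw [he']
    simp only [Finsupp.add_apply]
    rw [Finset.sum_add_distrib]
    rw [Finset.sum_congr rfl (fun i _ => hsing i), Finset.sum_ite_eq' Finset.univ i0 _]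
    simp only [Finset.mem_univ, if_pos]
    have : ∑ i, (toExp g) i = pdeg g := by rw [← degree_eq_sum_univ, degree_toExp]
    omega
  refine ⟨monomial e' 1, ?_, ?_⟩
  · exact SetLike.mem_coe.mpr
      (isHomogeneous_monomial 1 (by rw [degree_eq_sum_univ]; exact hdeg))
  · funext p
    rw [evalOnPts_apply, evalOnPts_apply, eval_monomial_prod, eval_monomial_prod]
    congr 1
    refine Finset.prod_congr rfl (fun i _ => ?_)
    by_cases hii : i = i0
    · have hsub : (b - pdeg g) % (q - 1) = 0 := Nat.sub_mod_eq_zero_of_mod_eq hmod.symm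
      have he'i : e' i = (toExp g) i + (b - pdeg g) := by
        rw [he', Finsupp.add_apply, hsing i, if_pos hii]
      rw [he'i]
      have hgz : (toExp g) i ≠ 0 := by
        rw [toExp_apply, hii]
        exact leadIdx_nonzero g hne
      refine pow_reduce hq _ ?_ ?_
      · rw [Nat.add_mod, hsub, add_zero, Nat.mod_mod_of_dvd _ dvd_rfl]
      · constructor <;> omega
    · have he'i : e' i = (toExp g) i := by
        rw [he', Finsupp.add_apply, hsing i, if_neg hii, add_zero]
      rw [he'i]

lemma card_le_finrank_PRM (q : ℕ) (hq : Fintype.card F = q) (hq2 : 2 ≤ q) (b : ℕ) (hb : 1 ≤ b) :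
    (Mset q (n + 1) b).card ≤ Module.finrank F (PRM F n b) := by
  classical
  set v : {g // g ∈ Mset q (n + 1) b} → (ProjPts F n → F) :=
    fun g => evalOnPts F n (monomial (toExp g.1) 1) with hv
  have hli : LinearIndependent F v := by
    rw [Fintype.linearIndependent_iff]
    intro c hc
    set P : MvPolynomial (Fin (n + 1)) F :=
      ∑ j : {g // g ∈ Mset q (n + 1) b}, monomial (toExp j.1) (c j) with hP
    have hev : ∀ w : Fin (n + 1) → F, MvPolynomial.eval w P = 0 := by
      intro w
      rw [hP, map_sum]
      by_cases hw : ∃ j, w j ≠ 0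
      · have hSne : (Finset.univ.filter (fun j => w j ≠ 0)).Nonempty := by
          obtain ⟨j, hj⟩ := hw; exact ⟨j, by simp [hj]⟩
        obtain ⟨i0, hwi0, hlt⟩ : ∃ i0, w i0 ≠ 0 ∧ ∀ j, j < i0 → w j = 0 := by
          refine ⟨(Finset.univ.filter (fun j => w j ≠ 0)).min' hSne, ?_, ?_⟩
          · have := Finset.min'_mem _ hSne
            simpa using this
          · intro j hj
            by_contra hz
            exact absurd (Finset.min'_le _ j (by simp [hz])) (not_le.mpr hj)
        have hstd : IsStdRep (fun j => (w i0)⁻¹ * w j : Fin (n + 1) → F) :=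
          ⟨i0, fun j hj => by show (w i0)⁻¹ * w j = 0; rw [hlt j hj, mul_zero],
            by show (w i0)⁻¹ * w i0 = 1; exact inv_mul_cancel₀ hwi0⟩
        set p : ProjPts F n := ⟨fun j => (w i0)⁻¹ * w j, hstd⟩ with hp
        have hpival : ∀ i, p.1 i = (w i0)⁻¹ * w i := fun i => rfl
        have hwp : ∀ i, w i = w i0 * p.1 i := by
          intro i
          rw [hpival, ← mul_assoc, mul_inv_cancel₀ hwi0, one_mul]
        have hterm : ∀ j : {g // g ∈ Mset q (n + 1) b},
            MvPolynomial.eval w (monomial (toExp j.1) (c j)) =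
            (w i0) ^ (rho q b) * (c j * MvPolynomial.eval p.1 (monomial (toExp j.1) 1)) := by
          intro j
          rw [eval_monomial_prod, eval_monomial_prod, one_mul]
          obtain ⟨hne, hle, hmod⟩ := mem_Mset.mp j.2
          have hsum : ∑ i, (toExp j.1) i = pdeg j.1 := by
            rw [← degree_eq_sum_univ, degree_toExp]
          have h1 : ∏ i, w i ^ ((toExp j.1) i) =
              (w i0) ^ (pdeg j.1) * ∏ i, p.1 i ^ ((toExp j.1) i) := by
            calc ∏ i, w i ^ ((toExp j.1) i)
                = ∏ i, ((w i0) ^ ((toExp j.1) i) * p.1 i ^ ((toExp j.1) i)) := by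
                  refine Finset.prod_congr rfl fun i _ => ?_
                  rw [← mul_pow, ← hwp]
              _ = (∏ i, (w i0) ^ ((toExp j.1) i)) * ∏ i, p.1 i ^ ((toExp j.1) i) :=
                  Finset.prod_mul_distrib
              _ = (w i0) ^ (pdeg j.1) * ∏ i, p.1 i ^ ((toExp j.1) i) := by
                  rw [Finset.prod_pow_eq_pow_sum, hsum]
          have h2 : (w i0) ^ (pdeg j.1) = (w i0) ^ (rho q b) := by
            refine pow_reduce hq _ ?_ ?_
            · rw [rho_mod, hmod]
            · have hpos := pdeg_pos j.2
              rw [rho_eq_zero_iff]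
              omega
          rw [h1, h2]
          ring
        rw [Finset.sum_congr rfl (fun j _ => hterm j), ← Finset.mul_sum]
        have hc' := congrFun hc p
        rw [Finset.sum_apply] at hc'
        simp only [Pi.zero_apply] at hc'
        have hz : ∑ j, c j * MvPolynomial.eval p.1 (monomial (toExp j.1) 1) = 0 := by
          rw [← hc']
          refine Finset.sum_congr rfl (fun j _ => ?_)
          rw [Pi.smul_apply, smul_eq_mul]
          rfl
        rw [hz, mul_zero]
      · push_neg at hw
        refine Finset.sum_eq_zero (fun j _ => ?_)
        rw [eval_monomial_prod]
        obtain ⟨⟨i, hi⟩, -, -⟩ := mem_Mset.mp j.2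
        have hzero : (w i) ^ ((toExp j.1) i) = 0 := by
          rw [hw i]
          exact zero_pow (by rw [toExp_apply]; exact hi)
        rw [Finset.prod_eq_zero (Finset.mem_univ i) hzero, mul_zero]
    have hPzero : P = 0 := by
      have hup : Function.Injective (ULift.up.{u_1} : Fin (n + 1) → ULift (Fin (n + 1))) :=
        fun x y h => congrArg ULift.down h
      have hren : MvPolynomial.rename (ULift.up.{u_1}) P = 0 := by
        refine MvPolynomial.eq_zero_of_eval_eq_zero (ULift.{u_1} (Fin (n + 1))) F _ ?_ ?_
        · intro v'
          rw [MvPolynomial.eval_rename]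
          exact hev _
        · rw [MvPolynomial.mem_restrictDegree]
          intro s hs i
          rw [MvPolynomial.support_rename_of_injective hup, Finset.mem_image] at hs
          obtain ⟨e, he, rfl⟩ := hs
          rw [hP] at he
          have hsub := MvPolynomial.support_sum (s := Finset.univ)
            (f := fun j : {g // g ∈ Mset q (n + 1) b} => monomial (toExp j.1) (c j)) he
          rw [Finset.mem_biUnion] at hsub
          obtain ⟨j, -, hj⟩ := hsub
          have hcoeff : MvPolynomial.coeff e (monomial (toExp j.1) (c j)) ≠ 0 :=
            mem_support_iff.mp hj
          rw [coeff_monomial] at hcoeff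
          have hse : toExp j.1 = e := by
            by_contra hne
            rw [if_neg hne] at hcoeff
            exact hcoeff rfl
          rw [Finsupp.mapDomain_apply hup, ← hse, toExp_apply, hq]
          have := (j.1 i.down).2
          omega
      exact MvPolynomial.rename_injective _ hup (by rw [hren, map_zero])
    intro j
    have hcj := congrArg (MvPolynomial.coeff (toExp j.1)) hPzero
    rw [hP, MvPolynomial.coeff_zero, MvPolynomial.coeff_sum] at hcj
    rw [Finset.sum_eq_single j (fun j' _ hj' => ?_) (fun hnj => absurd (Finset.mem_univ j) hnj)]
      at hcj
    · rwa [coeff_monomial, if_pos rfl] at hcj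
    · rw [coeff_monomial, if_neg (fun h12 => hj' (Subtype.ext (toExp_inj h12)))]
  have hmem : ∀ j, v j ∈ PRM F n b := fun j => monomial_mem_PRM q hq hq2 b j.2
  set v' : {g // g ∈ Mset q (n + 1) b} → (PRM F n b) := fun j => ⟨v j, hmem j⟩ with hv'
  have hli' : LinearIndependent F v' := LinearIndependent.of_comp (PRM F n b).subtype hli
  have hcard := hli'.fintype_card_le_finrank
  rwa [Fintype.card_coe] at hcard

end Eval

end PRMaux

theorem stmt4 (q n : ℕ) (F : Type*) [Field F] [Fintype F] [DecidableEq F]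
    (hq : Fintype.card F = q) (hn : 1 ≤ n) (a b : ℕ) (ha : 1 ≤ a) (hab : a < b) (hb : b ≤ n * (q - 1)) :
    (b : ℤ) - a ≤ (Module.finrank F (PRM F n b) : ℤ) - Module.finrank F (PRM F n a) := by
  have hq2 : 2 ≤ q := by rw [← hq]; exact Fintype.one_lt_card
  have h1 := PRMaux.finrank_PRM_le (n := n) q hq hq2 a ha
  have h2 := PRMaux.card_le_finrank_PRM (n := n) q hq hq2 b (by omega)
  have h3 := PRMaux.card_Mset_chain hq2 (le_of_lt hab) hb (n := n)
  omega
end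

section
/- Let k be an integer with 1 ≤ k ≤ n(q-1) such that k ≡ 0 (mod q-1), and let ℓ = n(q-1) − k. Then the dual code of C_{n,k}^q equals the 𝔽_q-span of the all-ones vector 𝟏 together with C_{n,ℓ}^q. -/
open scoped BigOperators

/-!
A homogeneous polynomial of degree `d` with `0 < d ≤ n(q-1)` and `q - 1 ∣ d` sums to zero over
`F^(n+1)` (Chevalley–Warning) and is invariant under scaling by units, so it also sums to zero
over the standard representatives. Applied to products `g * f` of forms of degrees `ℓ` and `k`
(and to `ℓ = 0` for `𝟏`), this gives `span 𝟏 ⊔ C_{n,ℓ} ≤ C_{n,k}^⊥`.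

Equality is a dimension count. The reduced monomials `x^μ` with `q - 1 ∣ |μ|` and
`μ ≠ (q-1,…,q-1)` restrict to a basis of all functions on `P'`: a function on `P'` extends to a
scale-invariant function on `F^(n+1)` summing to zero, whose reduced interpolant, averaged over
the units, has only such monomials. The involution `μ ↦ (q-1,…,q-1) - μ` shows that the exponents
of degree `≤ k` and those of degree `≤ ℓ` number `|P'| + 1` together, and they bound
`dim C_{n,k} + 1` and `dim (span 𝟏 ⊔ C_{n,ℓ})` from below.
-/

open MvPolynomial Finset Module

section StdRep

variable {F : Type*} [Field F] {n : ℕ}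

lemma IsStdRep.ne_zero {v : Fin (n + 1) → F} (hv : IsStdRep v) : v ≠ 0 := by
  obtain ⟨i, -, hi⟩ := hv
  rintro rfl
  exact zero_ne_one hi

lemma IsStdRep.eq_one_of_smul {v : Fin (n + 1) → F} {c : F} (hv : IsStdRep v)
    (hcv : IsStdRep (c • v)) : c = 1 := by
  obtain ⟨i, hi0, hi⟩ := hv
  obtain ⟨j, hj0, hj⟩ := hcv
  simp only [Pi.smul_apply, smul_eq_mul] at hj0 hj
  rcases lt_trichotomy i j with hij | rfl | hij
  · have hc : c = 0 := by simpa [hi] using hj0 i hij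
    simp [hc] at hj
  · simpa [hi] using hj
  · simp [hi0 j hij] at hj

lemma exists_units_smul_projPts_eq {v : Fin (n + 1) → F} (hv : v ≠ 0) :
    ∃ (t : Fˣ) (p : ProjPts F n), (t : F) • p.1 = v := by
  obtain ⟨i, hi, hmin⟩ := wellFounded_lt.has_min {i | v i ≠ 0} (Function.ne_iff.mp hv)
  have hlt (j) (hj : j < i) : v j = 0 := by_contra fun h => hmin j h hj
  refine ⟨Units.mk0 (v i) hi, ⟨(v i)⁻¹ • v, i, fun j hj => by simp [hlt j hj], ?_⟩, ?_⟩
  · simp [inv_mul_cancel₀ hi]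
  · simp [smul_inv_smul₀ hi]

lemma units_smul_projPts_injective :
    Function.Injective fun tp : Fˣ × ProjPts F n => (tp.1 : F) • tp.2.1 := by
  rintro ⟨t, p⟩ ⟨s, r⟩ h
  have hr : r.1 = ((s⁻¹ * t : Fˣ) : F) • p.1 := by
    rw [Units.val_mul, mul_smul, show (t : F) • p.1 = (s : F) • r.1 from h]
    simp
  have hts : s⁻¹ * t = 1 := Units.ext (p.2.eq_one_of_smul (hr ▸ r.2))
  obtain rfl : s = t := inv_mul_eq_one.mp hts
  obtain rfl : p = r := Subtype.ext (by simpa using hr.symm)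
  rfl

variable (F n) in
noncomputable def unitsSmulEquiv : Fˣ × ProjPts F n ≃ {v : Fin (n + 1) → F // v ≠ 0} :=
  Equiv.ofBijective (fun tp => ⟨(tp.1 : F) • tp.2.1, smul_ne_zero tp.1.ne_zero tp.2.2.ne_zero⟩)
    ⟨fun _ _ h => units_smul_projPts_injective (congrArg Subtype.val h), fun ⟨_, hv⟩ =>
      let ⟨t, p, h⟩ := exists_units_smul_projPts_eq hv
      ⟨(t, p), Subtype.ext h⟩⟩

end StdRep

section FiniteFieldSums

variable {F : Type*} [Field F] [Fintype F]

lemma FiniteField.sum_pow_card_sub_one : ∑ t : F, t ^ (Fintype.card F - 1) = -1 := by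
  classical
  have hpow (t : F) : t ^ (Fintype.card F - 1) = if t = 0 then 0 else 1 := by
    split_ifs with ht
    · rw [ht, zero_pow (Nat.sub_ne_zero_of_lt Fintype.one_lt_card)]
    · exact FiniteField.pow_card_sub_one_eq_one t ht
  simp [hpow, Finset.sum_ite, Finset.filter_ne', Nat.cast_sub Fintype.card_pos]

lemma FiniteField.sum_units_const [DecidableEq F] (a : F) : ∑ _t : Fˣ, a = -a := by
  rw [sum_const, card_univ, Fintype.card_units, nsmul_eq_mul, Nat.cast_sub Fintype.card_pos,
    FiniteField.cast_card_eq_zero, Nat.cast_one, zero_sub, neg_one_mul]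

lemma MvPolynomial.eval_smul_monomial {R σ : Type*} [CommSemiring R] (t : R) (v : σ → R)
    (μ : σ →₀ ℕ) (c : R) :
    eval (t • v) (monomial μ c) = t ^ μ.degree * eval v (monomial μ c) := by
  simp only [eval_monomial, Finsupp.prod, Pi.smul_apply, smul_eq_mul, mul_pow, prod_mul_distrib,
    prod_pow_eq_pow_sum, Finsupp.degree_apply]
  ring

lemma eval_units_smul_of_dvd_degree {σ : Type*} {f : MvPolynomial σ F}
    (hf : ∀ μ ∈ f.support, Fintype.card F - 1 ∣ μ.degree) (t : Fˣ) (v : σ → F) :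
    eval ((t : F) • v) f = eval v f := by
  rw [f.as_sum, map_sum, map_sum]
  refine sum_congr rfl fun μ hμ => ?_
  obtain ⟨m, hm⟩ := hf μ hμ
  rw [eval_smul_monomial, hm, pow_mul, FiniteField.pow_card_sub_one_eq_one _ t.ne_zero, one_pow,
    one_mul]

lemma sum_units_eval_smul [DecidableEq F] {σ : Type*} (P : MvPolynomial σ F) (v : σ → F) :
    ∑ t : Fˣ, eval ((t : F) • v) P =
      -eval v (∑ μ ∈ P.support with Fintype.card F - 1 ∣ μ.degree, monomial μ (coeff μ P)) := by
  conv_lhs => rw [P.as_sum]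
  simp_rw [map_sum, eval_smul_monomial]
  rw [sum_comm, sum_filter, ← sum_neg_distrib]
  refine sum_congr rfl fun μ _ => ?_
  rw [← sum_mul, FiniteField.sum_pow_units F μ.degree]
  split_ifs <;> simp

end FiniteFieldSums

section SumsOverProjPts

variable {F : Type*} [Field F] [Fintype F] [DecidableEq F] {n : ℕ}

lemma sum_eq_add_sum_units_smul {M : Type*} [AddCommMonoid M] (g : (Fin (n + 1) → F) → M) :
    ∑ v, g v = g 0 + ∑ t : Fˣ, ∑ p : ProjPts F n, g ((t : F) • p.1) := by
  rw [← Fintype.sum_prod_type', ← Fintype.sum_subtype_add_sum_subtype (· = 0),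
    Fintype.sum_equiv (unitsSmulEquiv F n) (fun tp => g ((tp.1 : F) • tp.2.1))
      (fun v : {v // v ≠ 0} => g v) (fun _ => rfl)]
  simp only [Fintype.sum_unique]
  rfl

lemma sum_eq_sub_sum_projPts {g : (Fin (n + 1) → F) → F}
    (hg : ∀ (t : Fˣ) v, g ((t : F) • v) = g v) :
    ∑ v, g v = g 0 - ∑ p : ProjPts F n, g p.1 := by
  rw [sum_eq_add_sum_units_smul g]
  simp only [hg, FiniteField.sum_units_const, sub_eq_add_neg]

lemma sum_eval_projPts_eq_zero_of_isHomogeneous {f : MvPolynomial (Fin (n + 1)) F} {d : ℕ}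
    (hf : f.IsHomogeneous d) (hd0 : d ≠ 0) (hdq : Fintype.card F - 1 ∣ d)
    (hdn : d ≤ n * (Fintype.card F - 1)) :
    ∑ p : ProjPts F n, eval p.1 f = 0 := by
  have hq : 1 ≤ Fintype.card F - 1 := Nat.le_sub_of_add_le Fintype.one_lt_card
  have hsum := sum_eval_eq_zero f (by rw [Fintype.card_fin]; nlinarith [hf.totalDegree_le])
  have hinv : ∀ μ ∈ f.support, Fintype.card F - 1 ∣ μ.degree := fun μ hμ => by
    rwa [Finsupp.degree_apply, ← hf.degree_eq_sum_deg_support hμ]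
  rwa [sum_eq_sub_sum_projPts (eval_units_smul_of_dvd_degree hinv), eval_zero, constantCoeff_eq,
    hf.coeff_eq_zero (by simpa using hd0.symm), zero_sub, neg_eq_zero] at hsum

end SumsOverProjPts

section DualCode

variable {F : Type*} [Field F] [Fintype F] {n : ℕ}

lemma finrank_add_finrank_dualCode (C : Submodule F (ProjPts F n → F)) :
    finrank F C + finrank F (dualCode C) = Fintype.card (ProjPts F n) := by
  classical
  have h : dualCode C =
      C.dualAnnihilator.comap (dotProductEquiv F (ProjPts F n)).toLinearMap := by
    ext y
    simp only [Submodule.mem_comap, Submodule.mem_dualAnnihilator]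
    exact forall₂_congr fun c _ => by simp [dotProduct]
  rw [h, Submodule.comap_equiv_eq_map_symm, LinearEquiv.finrank_map_eq,
    Subspace.finrank_add_finrank_dualAnnihilator_eq, finrank_fintype_fun_eq_card]

lemma one_mem_PRM_zero : (fun _ => 1 : ProjPts F n → F) ∈ PRM F n 0 :=
  ⟨1, isHomogeneous_one _ _, by ext; simp [evalOnPts]⟩

lemma PRM_le_dualCode_PRM [DecidableEq F] {k ℓ : ℕ} (h0 : ℓ + k ≠ 0)
    (hdvd : Fintype.card F - 1 ∣ ℓ + k) (hle : ℓ + k ≤ n * (Fintype.card F - 1)) :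
    PRM F n ℓ ≤ dualCode (PRM F n k) := by
  rintro _ ⟨g, hg, rfl⟩ _ ⟨f, hf, rfl⟩
  change ∑ p : ProjPts F n, eval p.1 g * eval p.1 f = 0
  simpa only [map_mul] using
    sum_eval_projPts_eq_zero_of_isHomogeneous (IsHomogeneous.mul hg hf) h0 hdvd hle

end DualCode

section Exponents

variable (F : Type*) [Fintype F] (n : ℕ)

noncomputable def topExp : Fin (n + 1) →₀ ℕ :=
  Finsupp.equivFunOnFinite.symm fun _ => Fintype.card F - 1

noncomputable def invariantExps : Finset (Fin (n + 1) →₀ ℕ) :=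
  (Iic (topExp F n)).filter fun μ => Fintype.card F - 1 ∣ μ.degree

noncomputable def basisExps : Finset (Fin (n + 1) →₀ ℕ) :=
  (invariantExps F n).erase (topExp F n)

variable {F n}

@[simp]
lemma topExp_apply (i : Fin (n + 1)) : topExp F n i = Fintype.card F - 1 := rfl

lemma le_topExp_iff {μ : Fin (n + 1) →₀ ℕ} : μ ≤ topExp F n ↔ ∀ i, μ i ≤ Fintype.card F - 1 :=
  Finsupp.le_def

lemma degree_topExp : (topExp F n).degree = (n + 1) * (Fintype.card F - 1) := by
  simp [Finsupp.degree_eq_sum]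

lemma degree_topExp_sub_add_degree {μ : Fin (n + 1) →₀ ℕ} (hμ : μ ≤ topExp F n) :
    (topExp F n - μ).degree + μ.degree = (n + 1) * (Fintype.card F - 1) := by
  rw [← map_add, tsub_add_cancel_of_le hμ, degree_topExp]

@[simp]
lemma mem_invariantExps {μ : Fin (n + 1) →₀ ℕ} :
    μ ∈ invariantExps F n ↔ μ ≤ topExp F n ∧ Fintype.card F - 1 ∣ μ.degree := by
  simp [invariantExps]

lemma topExp_mem_invariantExps : topExp F n ∈ invariantExps F n := by
  simp [degree_topExp]

lemma topExp_sub_mem_invariantExps {μ : Fin (n + 1) →₀ ℕ} (hμ : μ ∈ invariantExps F n) :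
    topExp F n - μ ∈ invariantExps F n := by
  rw [mem_invariantExps] at hμ ⊢
  have hsum := degree_topExp_sub_add_degree hμ.1
  refine ⟨tsub_le_self, ?_⟩
  rw [show (topExp F n - μ).degree = (n + 1) * (Fintype.card F - 1) - μ.degree by omega]
  exact Nat.dvd_sub (dvd_mul_left _ _) hμ.2

lemma mem_basisExps {μ : Fin (n + 1) →₀ ℕ} :
    μ ∈ basisExps F n ↔ μ ≠ topExp F n ∧ μ ≤ topExp F n ∧ Fintype.card F - 1 ∣ μ.degree := by
  simp [basisExps]

lemma filter_degree_le_subset_basisExps [Nontrivial F] {m : ℕ}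
    (hm : m ≤ n * (Fintype.card F - 1)) :
    {μ ∈ invariantExps F n | μ.degree ≤ m} ⊆ basisExps F n := by
  intro μ hμ
  obtain ⟨hμinv, hμm⟩ := mem_filter.mp hμ
  refine mem_erase.mpr ⟨?_, hμinv⟩
  rintro rfl
  have hq : 1 ≤ Fintype.card F - 1 := Nat.le_sub_of_add_le Fintype.one_lt_card
  rw [degree_topExp, add_one_mul] at hμm
  omega

lemma card_invariantExps [Nontrivial F] {k ℓ : ℕ} (hkℓ : k + ℓ = n * (Fintype.card F - 1))
    (hk : Fintype.card F - 1 ∣ k) :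
    #(invariantExps F n) = #{μ ∈ invariantExps F n | μ.degree ≤ k} +
      #{μ ∈ invariantExps F n | μ.degree ≤ ℓ} := by
  have hq : 1 ≤ Fintype.card F - 1 := Nat.le_sub_of_add_le Fintype.one_lt_card
  have hn : (n + 1) * (Fintype.card F - 1) = n * (Fintype.card F - 1) + (Fintype.card F - 1) :=
    add_one_mul _ _
  rw [← card_filter_add_card_filter_not (fun μ => μ.degree ≤ k)]
  congr 1
  refine card_nbij' (topExp F n - ·) (topExp F n - ·) ?_ ?_ ?_ ?_
  · intro μ hμ
    simp only [coe_filter, Set.mem_ofPred_eq] at hμ ⊢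
    obtain ⟨hμinv, hμk⟩ := hμ
    have hsum := degree_topExp_sub_add_degree (mem_invariantExps.mp hμinv).1
    -- a multiple of `q - 1` above the multiple `k` is at least `k + (q - 1)`
    have hgap := Nat.le_of_dvd (by omega) (Nat.dvd_sub (mem_invariantExps.mp hμinv).2 hk)
    exact ⟨topExp_sub_mem_invariantExps hμinv, by omega⟩
  · intro ν hν
    simp only [coe_filter, Set.mem_ofPred_eq] at hν ⊢
    obtain ⟨hνinv, hνℓ⟩ := hν
    have hsum := degree_topExp_sub_add_degree (mem_invariantExps.mp hνinv).1
    exact ⟨topExp_sub_mem_invariantExps hνinv, by omega⟩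
  · intro μ hμ
    exact tsub_tsub_cancel_of_le (mem_invariantExps.mp (mem_filter.mp hμ).1).1
  · intro ν hν
    exact tsub_tsub_cancel_of_le (mem_invariantExps.mp (mem_filter.mp hν).1).1

variable [Field F]

lemma sum_eval_eq_coeff_topExp {P : MvPolynomial (Fin (n + 1)) F}
    (hP : P ∈ restrictDegree (Fin (n + 1)) F (Fintype.card F - 1)) :
    ∑ v, eval v P = (-1) ^ (n + 1) * coeff (topExp F n) P := by
  classical
  have hfactor (μ) (hμ : μ ≤ topExp F n) :
      ∏ i, ∑ t : F, t ^ μ i = if μ = topExp F n then (-1) ^ (n + 1) else 0 := by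
    split_ifs with h
    · simp [h, FiniteField.sum_pow_card_sub_one]
    · obtain ⟨i, hi⟩ : ∃ i, μ i ≠ Fintype.card F - 1 := by
        contrapose! h
        ext i
        simp [h]
      exact prod_eq_zero (mem_univ i) (FiniteField.sum_pow_lt_card_sub_one _ _
        ((le_topExp_iff.mp hμ i).lt_of_ne hi))
  calc ∑ v, eval v P = ∑ μ ∈ P.support, coeff μ P * ∏ i, ∑ t : F, t ^ μ i := by
        simp_rw [eval_eq', prod_univ_sum, Fintype.piFinset_univ, mul_sum]
        exact sum_comm
    _ = ∑ μ ∈ P.support, if μ = topExp F n then coeff μ P * (-1) ^ (n + 1) else 0 := by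
        refine sum_congr rfl fun μ hμ => ?_
        rw [hfactor μ (le_topExp_iff.mpr ((mem_restrictDegree _ _ _).mp hP μ hμ)), mul_ite,
          mul_zero]
    _ = (-1) ^ (n + 1) * coeff (topExp F n) P := by
        rw [sum_ite_eq', mul_comm]
        split_ifs with h
        · rfl
        · rw [notMem_support_iff.mp h, mul_zero]

end Exponents

section MonomialBasis

variable {F : Type*} [Field F] [Fintype F] [DecidableEq F] {n : ℕ}

lemma eq_zero_of_evalOnPts_eq_zero {P : MvPolynomial (Fin (n + 1)) F}
    (hP : P ∈ restrictSupport F (basisExps F n : Set (Fin (n + 1) →₀ ℕ)))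
    (h : evalOnPts F n P = 0) : P = 0 := by
  have hsupp (μ) (hμ : μ ∈ P.support) := mem_basisExps.mp ((mem_restrictSupport_iff _).mp hP hμ)
  have hinv := eval_units_smul_of_dvd_degree fun μ hμ => (hsupp μ hμ).2.2
  have hpts (p : ProjPts F n) : eval p.1 P = 0 := congrFun h p
  have hreduced : P ∈ restrictDegree (Fin (n + 1)) F (Fintype.card F - 1) :=
    (mem_restrictDegree _ _ _).mpr fun μ hμ => le_topExp_iff.mp (hsupp μ hμ).2.1
  have hzero : eval 0 P = 0 := by
    have hsum := sum_eval_eq_coeff_topExp hreduced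
    rw [notMem_support_iff.mp fun h => (hsupp _ h).1 rfl, mul_zero,
      sum_eq_sub_sum_projPts hinv] at hsum
    simpa [hpts] using hsum
  refine eq_zero_of_eval_zero_at_prod_finset P (fun _ => univ) (fun i => ?_) (fun v _ => ?_)
  · rw [card_univ, degreeOf_lt_iff Fintype.card_pos]
    exact fun μ hμ => Nat.lt_of_le_pred Fintype.card_pos (le_topExp_iff.mp (hsupp μ hμ).2.1 i)
  · rcases eq_or_ne v 0 with rfl | hv
    · exact hzero
    · obtain ⟨t, p, rfl⟩ := exists_units_smul_projPts_eq hv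
      rw [hinv, hpts]

lemma exists_extension_sum_eq_zero (y : ProjPts F n → F) :
    ∃ g : (Fin (n + 1) → F) → F, (∀ (t : Fˣ) (p : ProjPts F n), g ((t : F) • p.1) = y p) ∧
      ∑ v, g v = 0 := by
  -- the value at `0` is what makes the total sum vanish
  let g : (Fin (n + 1) → F) → F := fun v =>
    if hv : v = 0 then ∑ p, y p else y ((unitsSmulEquiv F n).symm ⟨v, hv⟩).2
  have hg_smul (t : Fˣ) (p : ProjPts F n) : g ((t : F) • p.1) = y p := by
    have hv : (t : F) • p.1 ≠ 0 := smul_ne_zero t.ne_zero p.2.ne_zero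
    simp only [g, dif_neg hv]
    rw [show (⟨(t : F) • p.1, hv⟩ : {v : Fin (n + 1) → F // v ≠ 0}) = unitsSmulEquiv F n (t, p)
      from rfl, Equiv.symm_apply_apply]
  have hg_inv (t : Fˣ) (v) : g ((t : F) • v) = g v := by
    rcases eq_or_ne v 0 with rfl | hv
    · rw [smul_zero]
    · obtain ⟨s, p, rfl⟩ := exists_units_smul_projPts_eq hv
      rw [smul_smul, ← Units.val_mul, hg_smul, hg_smul]
  refine ⟨g, hg_smul, ?_⟩
  rw [sum_eq_sub_sum_projPts hg_inv, sub_eq_zero]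
  refine (dif_pos rfl).trans (sum_congr rfl fun p _ => ?_)
  simpa using (hg_smul 1 p).symm

lemma map_evalOnPts_restrictSupport_basisExps :
    (restrictSupport F (basisExps F n : Set (Fin (n + 1) →₀ ℕ))).map (evalOnPts F n) = ⊤ := by
  refine eq_top_iff.mpr fun y _ => ?_
  obtain ⟨g, hg_smul, hg_sum⟩ := exists_extension_sum_eq_zero y
  obtain ⟨P, hP, hPg⟩ : g ∈ (restrictDegree (Fin (n + 1)) F (Fintype.card F - 1)).map
      (evalₗ F (Fin (n + 1))) := by
    rw [map_restrict_dom_evalₗ]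
    trivial
  have hPeval (v) : eval v P = g v := congrFun hPg v
  have htop : coeff (topExp F n) P = 0 := by
    have h := sum_eval_eq_coeff_topExp hP
    simp only [hPeval, hg_sum] at h
    exact (mul_eq_zero.mp h.symm).resolve_left (pow_ne_zero _ (neg_ne_zero.mpr one_ne_zero))
  refine ⟨∑ μ ∈ P.support with Fintype.card F - 1 ∣ μ.degree, monomial μ (coeff μ P),
    sum_mem fun μ hμ => ?_, funext fun p => ?_⟩
  · obtain ⟨hμP, hμdvd⟩ := mem_filter.mp hμ
    refine (mem_restrictSupport_iff _).mpr ((support_monomial_subset).trans ?_)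
    rw [singleton_subset_iff, mem_basisExps]
    refine ⟨fun h => ?_, le_topExp_iff.mpr ((mem_restrictDegree _ _ _).mp hP μ hμP), hμdvd⟩
    exact mem_support_iff.mp hμP (h ▸ htop)
  · have h := sum_units_eval_smul P p.1
    simp only [hPeval, hg_smul, FiniteField.sum_units_const, neg_inj] at h
    exact h.symm

lemma finrank_map_evalOnPts_restrictSupport {S : Finset (Fin (n + 1) →₀ ℕ)}
    (hS : S ⊆ basisExps F n) :
    finrank F ((restrictSupport F (S : Set (Fin (n + 1) →₀ ℕ))).map (evalOnPts F n)) = #S := by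
  have hinj : Function.Injective ((evalOnPts F n).domRestrict (restrictSupport F (S : Set _))) := by
    rw [← LinearMap.ker_eq_bot, LinearMap.ker_eq_bot']
    exact fun P hP => Subtype.ext <| eq_zero_of_evalOnPts_eq_zero
      (restrictSupport_mono F (coe_subset.mpr hS) P.2) hP
  rw [← LinearMap.range_domRestrict, LinearMap.finrank_range_of_inj hinj,
    finrank_eq_card_basis (basisRestrictSupport F _)]
  simp

lemma card_projPts_eq_card_basisExps : Fintype.card (ProjPts F n) = #(basisExps F n) := by
  rw [← finrank_map_evalOnPts_restrictSupport subset_rfl,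
    map_evalOnPts_restrictSupport_basisExps, finrank_top, finrank_fintype_fun_eq_card]

lemma card_le_finrank_of_evalOnPts_monomial_mem {S : Finset (Fin (n + 1) →₀ ℕ)}
    (hS : S ⊆ basisExps F n) {W : Submodule F (ProjPts F n → F)}
    (hW : ∀ μ ∈ S, evalOnPts F n (monomial μ 1) ∈ W) :
    #S ≤ finrank F W := by
  rw [← finrank_map_evalOnPts_restrictSupport hS]
  refine Submodule.finrank_mono ?_
  rw [restrictSupport_eq_span, Submodule.map_span_le]
  rintro _ ⟨μ, hμ, rfl⟩
  exact hW μ hμ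

lemma evalOnPts_monomial_mem_PRM {μ : Fin (n + 1) →₀ ℕ} {k : ℕ} (hμ : μ ≠ 0)
    (hμk : μ.degree ≤ k) (hdvd : Fintype.card F - 1 ∣ k - μ.degree) :
    evalOnPts F n (monomial μ 1) ∈ PRM F n k := by
  obtain ⟨i, hi⟩ := Finsupp.ne_iff.mp hμ
  obtain ⟨m, hm⟩ := hdvd
  -- on `F`, raising the exponent of a variable that occurs by a multiple of `q - 1` changes nothing
  refine ⟨monomial μ 1 * X i ^ ((Fintype.card F - 1) * m), ?_, funext fun p => ?_⟩
  · rw [SetLike.mem_coe, mem_homogeneousSubmodule,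
      show k = μ.degree + 1 * ((Fintype.card F - 1) * m) by omega]
    exact (isHomogeneous_monomial _ rfl).mul ((isHomogeneous_X _ _).pow _)
  · change eval p.1 (_ * _) = eval p.1 _
    rw [map_mul, map_pow, eval_X]
    by_cases hpi : p.1 i = 0
    · rw [eval_monomial, Finsupp.prod, prod_eq_zero (Finsupp.mem_support_iff.mpr hi)
        (by rw [hpi, zero_pow hi]), mul_zero, zero_mul]
    · rw [pow_mul, FiniteField.pow_card_sub_one_eq_one _ hpi, one_pow, mul_one]

lemma card_filter_degree_le_le_finrank_PRM {k : ℕ} (hk : k ≤ n * (Fintype.card F - 1))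
    (hkd : Fintype.card F - 1 ∣ k) :
    #{μ ∈ invariantExps F n | μ.degree ≤ k} ≤ finrank F (PRM F n k) + 1 := by
  have h0 : 0 ∈ {μ ∈ invariantExps F n | μ.degree ≤ k} := by simp
  rw [← card_erase_add_one h0, add_le_add_iff_right]
  refine card_le_finrank_of_evalOnPts_monomial_mem
    ((erase_subset _ _).trans (filter_degree_le_subset_basisExps hk)) fun μ hμ => ?_
  obtain ⟨hμ0, hμA⟩ := mem_erase.mp hμ
  obtain ⟨hμinv, hμk⟩ := mem_filter.mp hμA
  exact evalOnPts_monomial_mem_PRM hμ0 hμk (Nat.dvd_sub hkd (mem_filter.mp hμinv).2)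

lemma card_filter_degree_le_le_finrank_span_one_sup_PRM {ℓ : ℕ}
    (hℓ : ℓ ≤ n * (Fintype.card F - 1)) (hℓd : Fintype.card F - 1 ∣ ℓ) :
    #{μ ∈ invariantExps F n | μ.degree ≤ ℓ} ≤
      finrank F ↥(Submodule.span F {fun _ : ProjPts F n => (1 : F)} ⊔ PRM F n ℓ) := by
  refine card_le_finrank_of_evalOnPts_monomial_mem (filter_degree_le_subset_basisExps hℓ)
    fun μ hμ => ?_
  obtain ⟨hμinv, hμℓ⟩ := mem_filter.mp hμ
  rcases eq_or_ne μ 0 with rfl | hμ0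
  · exact Submodule.mem_sup_left (Submodule.subset_span (by ext; simp [evalOnPts]))
  · exact Submodule.mem_sup_right
      (evalOnPts_monomial_mem_PRM hμ0 hμℓ (Nat.dvd_sub hℓd (mem_filter.mp hμinv).2))

end MonomialBasis

theorem stmt6_general (q n : ℕ) (F : Type*) [Field F] [Fintype F] [DecidableEq F]
    (hq : Fintype.card F = q) (k : ℕ) (hk1 : 1 ≤ k) (hk2 : k ≤ n * (q - 1))
    (hkd : (q - 1) ∣ k) :
    dualCode (PRM F n k) =
      Submodule.span F {fun _ : ProjPts F n => (1 : F)} ⊔ PRM F n (n * (q - 1) - k) := by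
  subst hq
  set ℓ := n * (Fintype.card F - 1) - k
  have hkℓ : k + ℓ = n * (Fintype.card F - 1) := by omega
  have hℓd : Fintype.card F - 1 ∣ ℓ := Nat.dvd_sub (dvd_mul_left _ _) hkd
  have hle : Submodule.span F {fun _ => 1} ⊔ PRM F n ℓ ≤ dualCode (PRM F n k) := by
    refine sup_le (Submodule.span_le.mpr (Set.singleton_subset_iff.mpr ?_)) ?_
    · exact PRM_le_dualCode_PRM (by omega) (by rwa [zero_add]) (by omega) one_mem_PRM_zero
    · exact PRM_le_dualCode_PRM (by omega) (by rw [add_comm, hkℓ]; exact dvd_mul_left _ _)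
        (by omega)
  refine (Submodule.eq_of_le_of_finrank_le hle ?_).symm
  have hdual := finrank_add_finrank_dualCode (PRM F n k)
  have hN := card_projPts_eq_card_basisExps (F := F) (n := n)
  have htop := card_erase_add_one (topExp_mem_invariantExps (F := F) (n := n))
  have hcount := card_invariantExps hkℓ hkd
  have hk_dim := card_filter_degree_le_le_finrank_PRM hk2 hkd
  have hℓ_dim := card_filter_degree_le_le_finrank_span_one_sup_PRM (F := F) (n := n)
    (by omega) hℓd
  rw [basisExps] at hN
  omega

theorem stmt6 (q n : ℕ) (F : Type*) [Field F] [Fintype F] [DecidableEq F]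
    (hq : Fintype.card F = q) (hn : 1 ≤ n) (k : ℕ) (hk1 : 1 ≤ k) (hk2 : k ≤ n * (q - 1))
    (hkd : (q - 1) ∣ k) :
    dualCode (PRM F n k) =
      Submodule.span F {fun _ : ProjPts F n => (1 : F)} ⊔ PRM F n (n * (q - 1) - k) :=
  stmt6_general q n F hq k hk1 hk2 hkd
end

section
/- Let ℓ be an integer with 1 ≤ ℓ ≤ n(q-1) and ℓ ≡ 0 (mod q-1). Then the all-ones vector 𝟏 (the constant function 1 on P') does not belong to the projective Reed-Muller code C_{n,ℓ}^q. -/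
open scoped BigOperators

lemma eval_smul_of_homogeneous {F : Type*} [CommRing F] {m l : ℕ}
    {f : MvPolynomial (Fin m) F} (hf : f.IsHomogeneous l) (c : F) (x : Fin m → F) :
    MvPolynomial.eval (c • x) f = c ^ l * MvPolynomial.eval x f := by
  rw [MvPolynomial.eval_eq', MvPolynomial.eval_eq', Finset.mul_sum]
  apply Finset.sum_congr rfl
  intro d hd
  have hdeg : d.degree = l := by
    rw [Finsupp.degree_eq_weight_one]
    exact hf (MvPolynomial.mem_support_iff.mp hd)
  have hsum : ∑ i : Fin m, d i = l := by
    rw [← hdeg, Finsupp.degree]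
    exact (Finset.sum_subset (Finset.subset_univ _)
      (fun i _ hi => Finsupp.notMem_support_iff.mp hi)).symm
  have : ∏ i, (c • x) i ^ d i = c ^ l * ∏ i, x i ^ d i := by
    simp only [Pi.smul_apply, smul_eq_mul, mul_pow]
    rw [Finset.prod_mul_distrib, Finset.prod_pow_eq_pow_sum, hsum]
  rw [this]; ring

theorem stmt7 (q n : ℕ) (F : Type*) [Field F] [Fintype F] [DecidableEq F]
    (hq : Fintype.card F = q) (hn : 1 ≤ n) (l : ℕ) (hl1 : 1 ≤ l) (hl2 : l ≤ n * (q - 1))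
    (hld : (q - 1) ∣ l) :
    (fun _ : ProjPts F n => (1 : F)) ∉ PRM F n l := by
  intro hmem
  obtain ⟨f, hf, hev⟩ := hmem
  have hf : f.IsHomogeneous l := hf
  have hq2 : 2 ≤ q := hq ▸ Fintype.one_lt_card
  have hev' : ∀ p : ProjPts F n, MvPolynomial.eval p.1 f = 1 := by
    intro p
    have := congrFun hev p
    simpa [evalOnPts] using this
  -- a sample point
  have hp0 : IsStdRep (fun j : Fin (n+1) => if j = 0 then (1:F) else 0) :=
    ⟨0, fun j hj => absurd hj (Fin.not_lt_zero j), by simp⟩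
  have hf0 : f ≠ 0 := by
    intro h
    have := hev' ⟨_, hp0⟩
    rw [h] at this
    simp at this
  have htd : f.totalDegree = l := hf.totalDegree hf0
  have hsum : ∑ x : Fin (n+1) → F, MvPolynomial.eval x f = 0 := by
    apply MvPolynomial.sum_eval_eq_zero
    rw [htd, hq, Fintype.card_fin]
    have : n * (q - 1) < (q - 1) * (n + 1) := by
      have : 1 ≤ q - 1 := by omega
      nlinarith
    omega
  -- every nonzero vector evaluates to 1
  have hone : ∀ x : Fin (n+1) → F, x ≠ 0 → MvPolynomial.eval x f = 1 := by
    intro x hx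
    have hi0 : ∃ i, x i ≠ 0 := by
      by_contra h
      push_neg at h
      exact hx (funext fun i => h i)
    set s : Finset (Fin (n + 1)) := Finset.univ.filter (fun i => x i ≠ 0) with hs
    have hsne : s.Nonempty := by
      obtain ⟨i, hi⟩ := hi0
      exact ⟨i, by simp [hs, hi]⟩
    set i := s.min' hsne with hidef
    have hxi : x i ≠ 0 := (Finset.mem_filter.mp (s.min'_mem hsne)).2
    have hlt : ∀ j, j < i → x j = 0 := by
      intro j hj
      by_contra h
      exact absurd (s.min'_le j (by simp [hs, h])) (not_le.mpr hj)
    set p : Fin (n+1) → F := (x i)⁻¹ • x with hpdef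
    have hp : IsStdRep p := by
      refine ⟨i, fun j hj => by simp [hpdef, hlt j hj], ?_⟩
      simp [hpdef]
      field_simp
    have hx_eq : x = (x i) • p := by
      funext j
      simp [hpdef, ← mul_assoc]
      field_simp
    rw [hx_eq, eval_smul_of_homogeneous hf, hev' ⟨p, hp⟩, mul_one]
    obtain ⟨m, hm⟩ := hld
    rw [hm, pow_mul]
    rw [show q - 1 = Fintype.card F - 1 by rw [hq]]
    rw [FiniteField.pow_card_sub_one_eq_one _ hxi, one_pow]
  have h0 : MvPolynomial.eval (0 : Fin (n+1) → F) f = 0 := by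
    rw [MvPolynomial.eval_zero, MvPolynomial.constantCoeff_eq]
    exact hf.coeff_eq_zero (by simp [map_zero]; omega)
  rw [← Finset.sum_erase_add _ _ (Finset.mem_univ (0 : Fin (n+1) → F)), h0, add_zero,
    Finset.sum_congr rfl (fun x hx => hone x (Finset.ne_of_mem_erase hx)),
    Finset.sum_const, Finset.card_erase_of_mem (Finset.mem_univ _), Finset.card_univ] at hsum
  have hc : Fintype.card (Fin (n + 1) → F) = q ^ (n + 1) := by
    rw [Fintype.card_fun, hq, Fintype.card_fin]
  rw [hc] at hsum
  have hqF : (q : F) = 0 := by rw [← hq]; exact Nat.cast_card_eq_zero F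
  have hneg : ((q ^ (n + 1) - 1 : ℕ) : F) = -1 := by
    rw [Nat.cast_sub (Nat.one_le_pow _ _ (by omega)), Nat.cast_pow, hqF, Nat.cast_one,
      zero_pow (Nat.succ_ne_zero n), zero_sub]
  rw [nsmul_eq_mul, mul_one, hneg] at hsum
  exact one_ne_zero (neg_eq_zero.mp hsum)
end

section
/- Suppose 1 ≤ k ≤ n(q-1)/2 and 2k ≡ 0 (mod q-1). Then C_{n,k}^q ⊆ C_{n,n(q-1)-k}^q: every evaluation vector of a homogeneous polynomial of degree k on P' is also the evaluation vector of some homogeneous polynomial of degree n(q-1)-k on P'. -/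
open scoped BigOperators

/-! Since `x ^ q = x` on `𝔽_q`, multiplying a monomial by `x_i ^ (c * (q - 1))` for a variable
`x_i` already occurring in it does not change its values on `𝔽_q^(n+1)`; this raises the degree
of a homogeneous polynomial of positive degree by any multiple of `q - 1`. When `q - 1 ∣ 2k`,
the degree `n(q - 1) - k` is `k` plus such a multiple. -/

open MvPolynomial

lemma MvPolynomial.eval_monomial_add_single_mul_card_sub_one {σ F : Type*} [Field F] [Fintype F]
    (x : σ → F) {s : σ →₀ ℕ} {i : σ} (hi : s i ≠ 0) (c : ℕ) (r : F) :
    eval x (monomial (s + Finsupp.single i (c * (Fintype.card F - 1))) r) =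
      eval x (monomial s r) := by
  rw [monomial_add_single, eval_mul, eval_pow, eval_X]
  by_cases hx : x i = 0
  · have hs : eval x (monomial s r) = 0 := by
      rw [eval_monomial, Finsupp.prod, Finset.prod_eq_zero (Finsupp.mem_support_iff.2 hi)
        (by rw [hx, zero_pow hi]), mul_zero]
    rw [hs, zero_mul]
  · rw [pow_mul', FiniteField.pow_card_sub_one_eq_one _ hx, one_pow, mul_one]

theorem PRM_le_PRM_add_mul_card_sub_one (F : Type*) [Field F] [Fintype F] (n : ℕ) {k : ℕ}
    (hk : k ≠ 0) (c : ℕ) : PRM F n k ≤ PRM F n (k + c * (Fintype.card F - 1)) := by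
  rw [PRM, Submodule.map_le_iff_le_comap, homogeneousSubmodule_eq_finsupp_supported,
    AddMonoidAlgebra.supported_eq_span_single, Submodule.span_le]
  rintro _ ⟨a, ha, rfl⟩
  change evalOnPts F n (monomial a 1) ∈ PRM F n _
  replace ha : a.degree = k := ha
  obtain ⟨i, hi⟩ : ∃ i, a i ≠ 0 := by
    by_contra! h
    exact hk (by rw [← ha, show a = 0 from Finsupp.ext h, map_zero])
  refine ⟨monomial (a + Finsupp.single i (c * (Fintype.card F - 1))) 1,
    isHomogeneous_monomial _ ?_, ?_⟩
  · rw [map_add, ha, Finsupp.degree_single]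
  · funext p
    exact eval_monomial_add_single_mul_card_sub_one p.1 hi c 1

theorem stmt11_general (q n : ℕ) (F : Type*) [Field F] [Fintype F]
    (hq : Fintype.card F = q) (k : ℕ) (hk1 : 1 ≤ k) (hk2 : 2 * k ≤ n * (q - 1))
    (hkd : (q - 1) ∣ 2 * k) :
    PRM F n k ≤ PRM F n (n * (q - 1) - k) := by
  obtain ⟨m, hm⟩ := hkd
  have hdeg : n * (q - 1) - k = k + (n - m) * (q - 1) := by
    rw [Nat.sub_mul, mul_comm m, ← hm]
    omega
  subst hq
  rw [hdeg]
  exact PRM_le_PRM_add_mul_card_sub_one F n (by omega) _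

theorem stmt11 (q n : ℕ) (F : Type*) [Field F] [Fintype F] [DecidableEq F]
    (hq : Fintype.card F = q) (hn : 1 ≤ n) (k : ℕ) (hk1 : 1 ≤ k) (hk2 : 2 * k ≤ n * (q - 1))
    (hkd : (q - 1) ∣ 2 * k) :
    PRM F n k ≤ PRM F n (n * (q - 1) - k) :=
  stmt11_general q n F hq k hk1 hk2 hkd
end

section
/- Let k be an integer with 1 ≤ k < n(q-1). Then the evaluation vector of the monomial x_0^k on P' lies in the dual code (C_{n,k}^q)^⊥, i.e., for every monomial m = x_0^{b_0}x_1^{b_1}⋯x_n^{b_n} of degree k, the sum over p ∈ P' of (x_0^k · m)(p) equals 0 in 𝔽_q. -/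
open scoped BigOperators

/-!
Points with `x₀ = 0` contribute nothing, since `x₀ᵏ` vanishes there (`k ≥ 1`). The remaining
points are `(1, w)` with `w ∈ F^n`, and on them `x₀ᵏ f` agrees with the dehomogenization
`f(1, w)`, a polynomial in `n` variables of degree at most `k < n(q - 1)`; the sum of such a
polynomial over all of `F^n` is zero, the lemma behind Chevalley–Warning.
-/

namespace MvPolynomial

variable {R σ τ : Type*} [CommSemiring R]

theorem totalDegree_aeval_le {g : σ → MvPolynomial τ R} {D : ℕ}
    (hg : ∀ i, (g i).totalDegree ≤ D) (f : MvPolynomial σ R) :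
    (aeval g f).totalDegree ≤ f.totalDegree * D := by
  rw [aeval_eq_eval₂Hom, coe_eval₂Hom, eval₂_eq]
  refine totalDegree_finsetSum_le fun d hd => ?_
  calc (algebraMap R _ (coeff d f) * ∏ i ∈ d.support, g i ^ d i).totalDegree
      ≤ ∑ i ∈ d.support, (g i ^ d i).totalDegree := by
        grw [totalDegree_mul, algebraMap_eq, totalDegree_C, zero_add, totalDegree_finsetProd]
    _ ≤ ∑ i ∈ d.support, d i * D :=
        Finset.sum_le_sum fun i _ => (totalDegree_pow _ _).trans (Nat.mul_le_mul_left _ (hg i))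
    _ ≤ f.totalDegree * D := by
        rw [← Finset.sum_mul]
        exact Nat.mul_le_mul_right _ (le_totalDegree hd)

theorem eval_aeval (g : σ → MvPolynomial τ R) (x : τ → R) (f : MvPolynomial σ R) :
    eval x (aeval g f) = eval (fun i => eval x (g i)) f := by
  rw [← coe_aeval_eq_eval, ← coe_aeval_eq_eval]
  exact DFunLike.congr_fun (comp_aeval g (aeval x)) f

end MvPolynomial

namespace ProjPts

variable {F : Type*} [Field F] {n : ℕ}

theorem coord_zero_eq_zero_or_one (p : ProjPts F n) : p.1 0 = 0 ∨ p.1 0 = 1 := by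
  obtain ⟨i, hlt, hi⟩ := p.2
  rcases eq_or_ne i 0 with rfl | h0
  · exact Or.inr hi
  · exact Or.inl (hlt 0 (Fin.pos_of_ne_zero h0))

def ofAffine (w : Fin n → F) : ProjPts F n :=
  ⟨Fin.cons 1 w, 0, fun j hj => absurd hj (Fin.not_lt_zero j), rfl⟩

theorem ofAffine_injective : Function.Injective (ofAffine (F := F) (n := n)) :=
  fun _ _ h => Fin.cons_right_injective (α := fun _ => F) 1 (congrArg Subtype.val h)

theorem sum_eq_sum_ofAffine [Fintype F] {M : Type*} [AddCommMonoid M]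
    (φ : (Fin (n + 1) → F) → M) (hφ : ∀ v, v 0 = 0 → φ v = 0) :
    ∑ p : ProjPts F n, φ p.1 = ∑ w : Fin n → F, φ (Fin.cons 1 w) := by
  refine (Fintype.sum_of_injective ofAffine ofAffine_injective _ _ (fun p hp => ?_)
    fun _ => rfl).symm
  refine hφ _ ((coord_zero_eq_zero_or_one p).resolve_right fun h1 => hp ⟨Fin.tail p.1, ?_⟩)
  exact Subtype.ext (show Fin.cons 1 (Fin.tail p.1) = p.1 by rw [← h1, Fin.cons_self_tail])

end ProjPts

theorem MvPolynomial.sum_eval_cons_one_eq_zero {F : Type*} [Field F] [Fintype F] {n : ℕ}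
    (f : MvPolynomial (Fin (n + 1)) F) (hf : f.totalDegree < n * (Fintype.card F - 1)) :
    ∑ w : Fin n → F, eval (Fin.cons 1 w) f = 0 := by
  set g : Fin (n + 1) → MvPolynomial (Fin n) F := Fin.cons 1 X
  have hg : ∀ i, (g i).totalDegree ≤ 1 := Fin.cases (by simp [g]) (by simp [g, totalDegree_X])
  have heval : ∀ w : Fin n → F, eval (Fin.cons 1 w) f = eval w (aeval g f) := fun w => by
    rw [eval_aeval]; congr 2; funext i; cases i using Fin.cases <;> simp [g]
  simp only [heval]
  refine sum_eval_eq_zero _ ?_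
  calc (aeval g f).totalDegree ≤ f.totalDegree := by simpa using totalDegree_aeval_le hg f
    _ < _ := by rwa [Fintype.card_fin, mul_comm]

theorem stmt13_general (q n : ℕ) (F : Type*) [Field F] [Fintype F]
    (hq : Fintype.card F = q) (k : ℕ) (hk1 : 1 ≤ k) (hk2 : k < n * (q - 1)) :
    (fun p : ProjPts F n => p.1 0 ^ k) ∈ dualCode (PRM F n k) := by
  subst hq
  rintro _ ⟨f, hf, rfl⟩
  change ∑ p : ProjPts F n, p.1 0 ^ k * MvPolynomial.eval p.1 f = 0
  rw [ProjPts.sum_eq_sum_ofAffine (fun v => v 0 ^ k * MvPolynomial.eval v f)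
    fun v hv => by rw [hv, zero_pow (by omega), zero_mul]]
  simp only [Fin.cons_zero, one_pow, one_mul]
  exact MvPolynomial.sum_eval_cons_one_eq_zero f
    ((MvPolynomial.IsHomogeneous.totalDegree_le hf).trans_lt hk2)

theorem stmt13 (q n : ℕ) (F : Type*) [Field F] [Fintype F] [DecidableEq F]
    (hq : Fintype.card F = q) (hn : 1 ≤ n) (k : ℕ) (hk1 : 1 ≤ k) (hk2 : k < n * (q - 1)) :
    (fun p : ProjPts F n => p.1 0 ^ k) ∈ dualCode (PRM F n k) :=
  stmt13_general q n F hq k hk1 hk2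
end

section
/- Let k be an integer with 1 ≤ k < n(q-1). Then C_{n,k}^q ∩ (C_{n,k}^q)^⊥ is nontrivial; that is, the projective Reed-Muller code C_{n,k}^q is not an LCD code. -/
open scoped BigOperators

lemma projPts_zero_cases {F : Type*} [Field F] {n : ℕ} (p : ProjPts F n) :
    p.1 0 = 1 ∨ p.1 0 = 0 := by
  obtain ⟨i, h1, h2⟩ := p.2
  rcases eq_or_ne i 0 with rfl | hi
  · exact Or.inl h2
  · exact Or.inr (h1 0 (Fin.pos_of_ne_zero hi))

noncomputable def stdOne {F : Type*} [Field F] {n : ℕ} (w : Fin n → F) : ProjPts F n :=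
  ⟨Fin.cons 1 w, 0, fun j hj => absurd hj (by simp), by simp⟩

lemma key_sum (F : Type*) [Field F] [Fintype F] [DecidableEq F] (q n : ℕ)
    (hq : Fintype.card F = q) (hn : 1 ≤ n) (e : Fin (n + 1) → ℕ)
    (he0 : 0 < e 0) (hes : ∑ j : Fin n, e j.succ < n * (q - 1)) :
    ∑ p : ProjPts F n, ∏ i, (p.1 i) ^ (e i) = 0 := by
  classical
  have himg : ∀ p : ProjPts F n, p.1 0 = 1 → p ∈ Finset.image stdOne (Finset.univ : Finset (Fin n → F)) := by
    intro p hp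
    refine Finset.mem_image.mpr ⟨Fin.tail p.1, Finset.mem_univ _, ?_⟩
    apply Subtype.ext
    simp [stdOne, ← hp, Fin.cons_self_tail]
  have h1 : ∑ p : ProjPts F n, ∏ i, (p.1 i) ^ (e i)
      = ∑ p ∈ Finset.image stdOne (Finset.univ : Finset (Fin n → F)), ∏ i, (p.1 i) ^ (e i) := by
    refine (Finset.sum_subset (Finset.subset_univ _) ?_).symm
    intro p _ hp
    rcases projPts_zero_cases p with h | h
    · exact absurd (himg p h) hp
    · exact Finset.prod_eq_zero (Finset.mem_univ 0) (by rw [h, zero_pow he0.ne'])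
  have hinj : Function.Injective (stdOne (F := F) (n := n)) := by
    intro a b hab
    have := congrArg (fun p => Fin.tail p.1) hab
    simpa [stdOne, Fin.tail_cons] using this
  rw [h1, Finset.sum_image (fun a _ b _ h => hinj h)]
  have h2 : ∀ w : Fin n → F, ∏ i, ((stdOne w).1 i) ^ (e i)
      = ∏ j : Fin n, (w j) ^ (e j.succ) := by
    intro w
    rw [Fin.prod_univ_succ]
    simp [stdOne]
  simp_rw [h2]
  rw [← Fintype.prod_sum (fun (j : Fin n) (t : F) => t ^ (e j.succ))]
  obtain ⟨j, hj⟩ : ∃ j : Fin n, e j.succ < q - 1 := by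
    by_contra hcon
    push_neg at hcon
    have : n * (q - 1) ≤ ∑ j : Fin n, e j.succ := by
      calc n * (q - 1) = ∑ _j : Fin n, (q - 1) := by simp [Finset.sum_const, mul_comm]
      _ ≤ ∑ j : Fin n, e j.succ := Finset.sum_le_sum (fun j _ => hcon j)
    omega
  refine Finset.prod_eq_zero (Finset.mem_univ j) ?_
  exact FiniteField.sum_pow_lt_card_sub_one F (e j.succ) (by rw [hq]; exact hj)

theorem stmt14 (q n : ℕ) (F : Type*) [Field F] [Fintype F] [DecidableEq F]
    (hq : Fintype.card F = q) (hn : 1 ≤ n) (k : ℕ) (hk1 : 1 ≤ k) (hk2 : k < n * (q - 1)) :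
    PRM F n k ⊓ dualCode (PRM F n k) ≠ ⊥ := by
  classical
  rw [Submodule.ne_bot_iff]
  refine ⟨evalOnPts F n (MvPolynomial.X 0 ^ k), Submodule.mem_inf.mpr ⟨?_, ?_⟩, ?_⟩
  · exact ⟨MvPolynomial.X 0 ^ k, MvPolynomial.isHomogeneous_X_pow 0 k, rfl⟩
  · intro c hc
    obtain ⟨g, hg, rfl⟩ := Submodule.mem_map.mp hc
    show ∑ p : ProjPts F n,
        MvPolynomial.eval p.1 (MvPolynomial.X 0 ^ k) * MvPolynomial.eval p.1 g = 0
    have main : ∀ v ∈ g.support,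
        ∑ p : ProjPts F n, (p.1 0) ^ k * ∏ i, (p.1 i) ^ (v i) = 0 := by
      intro v hv
      have hvdeg : ∑ i : Fin (n + 1), v i = k := by
        have h1 : (Finsupp.weight 1 v : ℕ) = k := hg (MvPolynomial.mem_support_iff.mp hv)
        have h2 : (Finsupp.weight 1 v : ℕ) = ∑ i : Fin (n + 1), v i := by
          rw [Finsupp.weight_apply, Finsupp.sum_fintype]
          · simp
          · intro i; simp
        omega
      have hle : ∑ j : Fin n, v j.succ ≤ k := by
        rw [Fin.sum_univ_succ] at hvdeg
        omega
      have hkey := key_sum F q n hq hn (Fin.cons (v 0 + k) (fun j => v j.succ))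
        (by simp; omega) (by simpa using lt_of_le_of_lt hle hk2)
      calc ∑ p : ProjPts F n, (p.1 0) ^ k * ∏ i, (p.1 i) ^ (v i)
          = ∑ p : ProjPts F n, ∏ i, (p.1 i) ^ ((Fin.cons (v 0 + k) (fun j => v j.succ) : Fin (n+1) → ℕ) i) := by
            refine Finset.sum_congr rfl (fun p _ => ?_)
            rw [Fin.prod_univ_succ, Fin.prod_univ_succ]
            simp [pow_add]
            ring
        _ = 0 := hkey
    simp only [MvPolynomial.eval_pow, MvPolynomial.eval_X]
    simp_rw [MvPolynomial.eval_eq', Finset.mul_sum]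
    rw [Finset.sum_comm]
    refine Finset.sum_eq_zero (fun v hv => ?_)
    simp_rw [mul_left_comm ((_ : ProjPts F n).1 0 ^ k)]
    rw [← Finset.mul_sum, main v hv, mul_zero]
  · intro h
    have h0 := congrFun h (stdOne 0)
    have : (1 : F) = 0 := by
      simpa [evalOnPts, stdOne] using h0
    exact one_ne_zero this
end

section
/- The projective Reed-Muller code C_{n,n(q-1)}^q is an LCD code: C_{n,n(q-1)}^q ∩ (C_{n,n(q-1)}^q)^⊥ = {0}. -/
open scoped BigOperators

section Aux

open MvPolynomial Finset

variable {F : Type*} [Field F] [Fintype F] [DecidableEq F] {n : ℕ}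

private lemma zero_pow_q1 : (0 : F) ^ (Fintype.card F - 1) = 0 := by
  have : 1 < Fintype.card F := Fintype.one_lt_card
  exact zero_pow (by omega)

private lemma pow_q1 (a : F) (ha : a ≠ 0) : a ^ (Fintype.card F - 1) = 1 :=
  FiniteField.pow_card_sub_one_eq_one a ha

/-- Uniqueness of the standard representative on a projective line. -/
private lemma stdrep_unique {v w : Fin (n + 1) → F} (hw : IsStdRep w) {i : Fin (n + 1)}
    (hv0 : ∀ j, j < i → v j = 0) (hvi : v i = 1) (hwi : w i ≠ 0)
    (hprop : ∀ j, w j = v j * w i) : w = v := by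
  obtain ⟨i', h0', hi'⟩ := hw
  have hii : i' = i := by
    rcases lt_trichotomy i' i with h | h | h
    · exfalso
      have : w i' = 0 := by rw [hprop i', hv0 i' h, zero_mul]
      rw [hi'] at this; exact one_ne_zero this
    · exact h
    · exact absurd (h0' i h) hwi
  have hwi1 : w i = 1 := by rw [← hii, hi']
  funext j
  rw [hprop j, hwi1, mul_one]

/-- Every nonzero vector is a nonzero multiple of a standard representative. -/
private lemma exists_norm {v : Fin (n + 1) → F} (hv : v ≠ 0) :
    ∃ (w : ProjPts F n) (c : F), c ≠ 0 ∧ v = c • w.1 := by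
  have hne : ∃ i, v i ≠ 0 := by
    by_contra h; push_neg at h; exact hv (funext h)
  let S : Finset (Fin (n + 1)) := Finset.univ.filter (fun i => v i ≠ 0)
  have hS : S.Nonempty := ⟨hne.choose, by simp [S, hne.choose_spec]⟩
  set i := S.min' hS with hidef
  have hvi : v i ≠ 0 := by
    have := S.min'_mem hS
    simpa [S] using this
  have h0 : ∀ j, j < i → v j = 0 := by
    intro j hj
    by_contra hj0
    have : i ≤ j := S.min'_le j (by simp [S, hj0])
    exact absurd hj (not_lt.mpr this)
  refine ⟨⟨(v i)⁻¹ • v, i, ?_, ?_⟩, v i, hvi, ?_⟩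
  · intro j hj
    simp [h0 j hj]
  · simp [inv_mul_cancel₀ hvi]
  · funext j
    simp [mul_inv_cancel_left₀ hvi]

/-- Scaling a point scales the evaluation of a homogeneous polynomial. -/
private lemma eval_smul_of_homog {m : ℕ} {f : MvPolynomial (Fin (n + 1)) F}
    (hf : f.IsHomogeneous m) (c : F) (v : Fin (n + 1) → F) :
    eval (c • v) f = c ^ m * eval v f := by
  rw [eval_eq', eval_eq', Finset.mul_sum]
  refine Finset.sum_congr rfl fun d hd => ?_
  have hdeg : Finsupp.degree d = m := by
    by_contra h
    exact (MvPolynomial.mem_support_iff.mp hd) (hf.coeff_eq_zero h)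
  have hsum : ∑ i, d i = m := by
    rw [← hdeg]
    exact (Finset.sum_subset (Finset.subset_univ _)
      (fun x _ hx => Finsupp.notMem_support_iff.mp hx)).symm
  calc f.coeff d * ∏ i, (c • v) i ^ d i
      = f.coeff d * ((∏ i, c ^ d i) * ∏ i, v i ^ d i) := by
        rw [← Finset.prod_mul_distrib]
        refine congrArg _ (Finset.prod_congr rfl fun i _ => ?_)
        simp [mul_pow]
    _ = c ^ m * (f.coeff d * ∏ i, v i ^ d i) := by
        rw [Finset.prod_pow_eq_pow_sum, hsum]; ring

variable (F n) in
/-- The auxiliary monomial `∏_{j ≠ i} x_j^{q-1}`. -/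
noncomputable def gP (i : Fin (n + 1)) : MvPolynomial (Fin (n + 1)) F :=
  ∏ j ∈ Finset.univ.erase i, (X j) ^ (Fintype.card F - 1)

/-- The quasi-indicator polynomial of a standard point `v` with leading index `i`. -/
noncomputable def fP (v : Fin (n + 1) → F) (i : Fin (n + 1)) : MvPolynomial (Fin (n + 1)) F :=
  ∏ j ∈ Finset.univ.erase i,
    ((X i) ^ (Fintype.card F - 1) - (X j - C (v j) * X i) ^ (Fintype.card F - 1))

private lemma card_erase (i : Fin (n + 1)) : (Finset.univ.erase i).card = n := by
  rw [Finset.card_erase_of_mem (Finset.mem_univ i), Finset.card_univ, Fintype.card_fin]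
  omega

private lemma gP_homog (i : Fin (n + 1)) :
    (gP F n i).IsHomogeneous (n * (Fintype.card F - 1)) := by
  have h := MvPolynomial.IsHomogeneous.prod (Finset.univ.erase i)
      (fun j => (X j : MvPolynomial (Fin (n + 1)) F) ^ (Fintype.card F - 1))
      (fun _ => Fintype.card F - 1)
      (fun j _ => MvPolynomial.isHomogeneous_X_pow j _)
  rwa [Finset.sum_const, card_erase, smul_eq_mul] at h

private lemma fP_homog (v : Fin (n + 1) → F) (i : Fin (n + 1)) :
    (fP v i).IsHomogeneous (n * (Fintype.card F - 1)) := by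
  have h := MvPolynomial.IsHomogeneous.prod (Finset.univ.erase i)
      (fun j => (X i : MvPolynomial (Fin (n + 1)) F) ^ (Fintype.card F - 1)
        - (X j - C (v j) * X i) ^ (Fintype.card F - 1))
      (fun _ => Fintype.card F - 1)
      (fun j _ => ?_)
  · rwa [Finset.sum_const, card_erase, smul_eq_mul] at h
  · have h2 : ((X j - C (v j) * X i : MvPolynomial (Fin (n + 1)) F) ^
        (Fintype.card F - 1)).IsHomogeneous (1 * (Fintype.card F - 1)) :=
      ((MvPolynomial.isHomogeneous_X F j).sub
        (MvPolynomial.isHomogeneous_C_mul_X (v j) i)).pow _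
    rw [one_mul] at h2
    exact (MvPolynomial.isHomogeneous_X_pow i _).sub h2

private lemma eval_gP (i : Fin (n + 1)) (w : Fin (n + 1) → F) :
    eval w (gP F n i) = if ∀ j, j ≠ i → w j ≠ 0 then 1 else 0 := by
  rw [gP, map_prod]
  simp only [map_pow, eval_X]
  by_cases h : ∀ j, j ≠ i → w j ≠ 0
  · rw [if_pos h]
    exact Finset.prod_eq_one fun j hj => pow_q1 _ (h j (Finset.mem_erase.mp hj).1)
  · rw [if_neg h]
    push_neg at h
    obtain ⟨j, hji, hj0⟩ := h
    exact Finset.prod_eq_zero (Finset.mem_erase.mpr ⟨hji, Finset.mem_univ j⟩)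
      (by rw [hj0]; exact zero_pow_q1)

private lemma eval_fP_case0 (v : Fin (n + 1) → F) (i : Fin (n + 1)) (w : Fin (n + 1) → F)
    (hwi : w i = 0) :
    eval w (fP v i) = (-1 : F) ^ n * eval w (gP F n i) := by
  rw [fP, gP, map_prod, map_prod]
  calc (∏ j ∈ Finset.univ.erase i,
          eval w ((X i) ^ (Fintype.card F - 1) - (X j - C (v j) * X i) ^ (Fintype.card F - 1)))
      = ∏ j ∈ Finset.univ.erase i, (-1 : F) * eval w ((X j) ^ (Fintype.card F - 1)) := by
        refine Finset.prod_congr rfl fun j hj => ?_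
        simp only [map_sub, map_pow, map_mul, eval_X, eval_C, hwi, mul_zero, sub_zero]
        rw [zero_pow_q1, zero_sub, neg_one_mul]
    _ = (-1 : F) ^ n * ∏ j ∈ Finset.univ.erase i, eval w ((X j) ^ (Fintype.card F - 1)) := by
        rw [Finset.prod_mul_distrib, Finset.prod_const, card_erase]

/-- The key evaluation identity: `fP - (-1)^n gP` evaluates to the difference of the
indicator of the point and `(-1)^n` times the indicator of points with all nonzero coords. -/
private lemma eval_FP (p w : ProjPts F n) {i : Fin (n + 1)}
    (h0 : ∀ j, j < i → p.1 j = 0) (hi : p.1 i = 1) :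
    eval w.1 (fP p.1 i) - (-1 : F) ^ n * eval w.1 (gP F n i)
      = (if w = p then 1 else 0) - (-1 : F) ^ n * (if ∀ j, w.1 j ≠ 0 then 1 else 0) := by
  by_cases hwi : w.1 i = 0
  · rw [eval_fP_case0 _ _ _ hwi, sub_self]
    have h1 : w ≠ p := by
      intro h; rw [h] at hwi; rw [hi] at hwi; exact one_ne_zero hwi
    have h2 : ¬ ∀ j, w.1 j ≠ 0 := fun h => h i hwi
    rw [if_neg h1, if_neg h2, mul_zero, sub_zero]
  · have hfactor : eval w.1 (fP p.1 i) = if w = p then 1 else 0 := by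
      rw [fP, map_prod]
      by_cases hwp : w = p
      · rw [if_pos hwp]
        refine Finset.prod_eq_one fun j hj => ?_
        simp only [map_sub, map_pow, map_mul, eval_X, eval_C]
        rw [pow_q1 _ hwi]
        have : w.1 j - p.1 j * w.1 i = 0 := by
          rw [hwp]
          have : p.1 i = 1 := hi
          rw [this, mul_one, sub_self]
        rw [this, zero_pow_q1, sub_zero]
      · rw [if_neg hwp]
        have hex : ¬ ∀ j, j ≠ i → w.1 j = p.1 j * w.1 i := by
          intro hall
          apply hwp
          have hall' : ∀ j, w.1 j = p.1 j * w.1 i := by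
            intro j
            by_cases hj : j = i
            · subst hj; rw [hi, one_mul]
            · exact hall j hj
          exact Subtype.ext (stdrep_unique w.2 h0 hi hwi hall')
        push_neg at hex
        obtain ⟨j, hji, hjne⟩ := hex
        refine Finset.prod_eq_zero (Finset.mem_erase.mpr ⟨hji, Finset.mem_univ j⟩) ?_
        simp only [map_sub, map_pow, map_mul, eval_X, eval_C]
        rw [pow_q1 _ hwi, pow_q1 _ (sub_ne_zero.mpr hjne), sub_self]
    have hg : eval w.1 (gP F n i) = if ∀ j, w.1 j ≠ 0 then 1 else 0 := by
      rw [eval_gP]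
      congr 1
      apply propext
      constructor
      · intro h j
        by_cases hj : j = i
        · subst hj; exact hwi
        · exact h j hj
      · intro h j _
        exact h j
    rw [hfactor, hg]

/-- Chevalley–Warning: a homogeneous polynomial of degree `n(q-1)` in `n+1` variables has
zero evaluation sum over the whole affine space. -/
private lemma sum_eval_homog_eq_zero {f : MvPolynomial (Fin (n + 1)) F}
    (hf : f.IsHomogeneous (n * (Fintype.card F - 1))) :
    ∑ v : Fin (n + 1) → F, eval v f = 0 := by
  apply MvPolynomial.sum_eval_eq_zero
  have h1 : 1 < Fintype.card F := Fintype.one_lt_card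
  have h2 : f.totalDegree ≤ n * (Fintype.card F - 1) := hf.totalDegree_le
  have h3 : (Fintype.card F - 1) * Fintype.card (Fin (n + 1))
      = n * (Fintype.card F - 1) + (Fintype.card F - 1) := by
    rw [Fintype.card_fin, mul_comm, add_mul, one_mul]
  rw [h3]
  exact lt_of_le_of_lt h2 (Nat.lt_add_of_pos_right (by omega))

/-- If a homogeneous polynomial of degree `n(q-1)` is constant on standard representatives,
the constant is zero. -/
private lemma const_eq_zero {f : MvPolynomial (Fin (n + 1)) F} (hn : 1 ≤ n)
    (hf : f.IsHomogeneous (n * (Fintype.card F - 1))) (c : F)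
    (hconst : ∀ w : ProjPts F n, eval w.1 f = c) : c = 0 := by
  have hq1 : 1 < Fintype.card F := Fintype.one_lt_card
  have hm0 : n * (Fintype.card F - 1) ≠ 0 := by
    have : 1 ≤ Fintype.card F - 1 := by omega
    positivity
  have h0 : eval (0 : Fin (n + 1) → F) f = 0 := by
    have h := eval_smul_of_homog hf 0 0
    rw [smul_zero] at h
    rw [h, zero_pow hm0, zero_mul]
  have hv : ∀ v : Fin (n + 1) → F, v ≠ 0 → eval v f = c := by
    intro v hvne
    obtain ⟨w, c', hc', rfl⟩ := exists_norm hvne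
    rw [eval_smul_of_homog hf, hconst w, mul_comm n, pow_mul, pow_q1 _ hc', one_pow, one_mul]
  have hsum := sum_eval_homog_eq_zero hf
  rw [← Finset.add_sum_erase _ _ (Finset.mem_univ (0 : Fin (n + 1) → F)), h0, zero_add,
    Finset.sum_congr rfl (fun v hv' => hv v (Finset.mem_erase.mp hv').1),
    Finset.sum_const, Finset.card_erase_of_mem (Finset.mem_univ _), Finset.card_univ] at hsum
  have hcard : Fintype.card (Fin (n + 1) → F) = Fintype.card F ^ (n + 1) := by
    rw [Fintype.card_fun, Fintype.card_fin]
  rw [hcard, nsmul_eq_mul] at hsum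
  have hcast : ((Fintype.card F ^ (n + 1) - 1 : ℕ) : F) = -1 := by
    have h1 : 1 ≤ Fintype.card F ^ (n + 1) := Nat.one_le_pow _ _ (by omega)
    rw [Nat.cast_sub h1, Nat.cast_pow, FiniteField.cast_card_eq_zero,
      zero_pow (Nat.succ_ne_zero n), Nat.cast_one, zero_sub]
  rw [hcast, neg_one_mul, neg_eq_zero] at hsum
  exact hsum

end Aux

theorem stmt15 (q n : ℕ) (F : Type*) [Field F] [Fintype F] [DecidableEq F]
    (hq : Fintype.card F = q) (hn : 1 ≤ n) :
    PRM F n (n * (q - 1)) ⊓ dualCode (PRM F n (n * (q - 1))) = ⊥ := by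
  subst hq
  rw [eq_bot_iff]
  intro y hy
  rw [Submodule.mem_inf] at hy
  obtain ⟨hyC, hyD⟩ := hy
  have hdual : ∀ c ∈ PRM F n (n * (Fintype.card F - 1)),
      ∑ p : ProjPts F n, y p * c p = 0 := hyD
  have hconst : ∀ p p' : ProjPts F n, y p = y p' := by
    intro p p'
    obtain ⟨i, h0, hi⟩ := p.2
    obtain ⟨i', h0', hi'⟩ := p'.2
    set P1 : MvPolynomial (Fin (n + 1)) F :=
      (fP p.1 i - ((-1 : F) ^ n) • gP F n i) - (fP p'.1 i' - ((-1 : F) ^ n) • gP F n i')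
      with hP1
    have hhom : P1 ∈ MvPolynomial.homogeneousSubmodule (Fin (n + 1)) F
        (n * (Fintype.card F - 1)) := by
      refine Submodule.sub_mem _ (Submodule.sub_mem _ ?_ (Submodule.smul_mem _ _ ?_))
        (Submodule.sub_mem _ ?_ (Submodule.smul_mem _ _ ?_))
      · exact fP_homog p.1 i
      · exact gP_homog i
      · exact fP_homog p'.1 i'
      · exact gP_homog i'
    have hcode : evalOnPts F n P1 ∈ PRM F n (n * (Fintype.card F - 1)) :=
      Submodule.mem_map_of_mem hhom
    have hzero := hdual _ hcode
    have hval : ∀ w : ProjPts F n,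
        (evalOnPts F n P1) w = (if w = p then 1 else 0) - (if w = p' then 1 else 0) := by
      intro w
      show MvPolynomial.eval w.1 P1 = _
      rw [hP1]
      simp only [map_sub, MvPolynomial.smul_eval]
      rw [show MvPolynomial.eval w.1 (fP p.1 i) - (-1 : F) ^ n * MvPolynomial.eval w.1 (gP F n i)
          - (MvPolynomial.eval w.1 (fP p'.1 i')
            - (-1 : F) ^ n * MvPolynomial.eval w.1 (gP F n i'))
          = (MvPolynomial.eval w.1 (fP p.1 i)
              - (-1 : F) ^ n * MvPolynomial.eval w.1 (gP F n i))
            - (MvPolynomial.eval w.1 (fP p'.1 i')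
              - (-1 : F) ^ n * MvPolynomial.eval w.1 (gP F n i')) from rfl]
      rw [eval_FP p w h0 hi, eval_FP p' w h0' hi']
      ring
    rw [Finset.sum_congr rfl (fun w _ => by rw [hval w])] at hzero
    simp only [mul_sub, Finset.sum_sub_distrib, mul_ite, mul_one, mul_zero,
      Finset.sum_ite_eq', Finset.mem_univ, if_true] at hzero
    exact sub_eq_zero.mp hzero
  rw [PRM, Submodule.mem_map] at hyC
  obtain ⟨f, hfmem, hfy⟩ := hyC
  have hfhom : f.IsHomogeneous (n * (Fintype.card F - 1)) := hfmem
  have hp₀std : IsStdRep (fun j : Fin (n + 1) => if j = 0 then (1 : F) else 0) := by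
    refine ⟨0, ?_, by simp⟩
    intro j hj
    exact absurd hj (by simp [Fin.lt_def])
  set p₀ : ProjPts F n := ⟨_, hp₀std⟩ with hp₀
  have hcz : y p₀ = 0 := by
    apply const_eq_zero hn hfhom (y p₀)
    intro w
    have h1 : MvPolynomial.eval w.1 f = y w := congrFun hfy w
    rw [h1, hconst w p₀]
  rw [Submodule.mem_bot]
  funext w
  rw [show y w = y p₀ from hconst w p₀, hcz]
  rfl
end

section
/- Suppose k ≥ 1 and q > 2k+1. Then dim(Hull(C_{n,k}^q)) = dim(C_{n,k}^q) − 1 = C(n+k, k) − 1. Moreover, a basis for Hull(C_{n,k}^q) is given by the evaluation vectors on P' of all monomials of degree k in x_0, x_1, …, x_n except the monomial x_n^k. -/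
open scoped BigOperators

/-!
For `2k < q - 1` all exponents occurring in a product of two forms of degree `k` are below
`q - 1`, and for such exponents the character sum `∑_{p ∈ P'} pᵈ` vanishes unless `d` is
concentrated on the last coordinate (induct on `n`, splitting `P'` into the chart `x₀ = 1` and
the hyperplane `x₀ = 0`). Hence `∑ₚ c(p) c'(p) = c(e) c'(e)` on `C_{n,k}`, where
`e = (0 : ⋯ : 0 : 1)`, so the hull is the kernel of evaluation at `e`; since `x_nᵏ` is the only
degree-`k` monomial not vanishing at `e`, this kernel is spanned by the other monomials.
Evaluation is injective on forms of degree `k ≤ q`, which gives the dimension count.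
-/

theorem Submodule.sup_span_singleton_inf_of_le {K V : Type*} [DivisionRing K] [AddCommGroup V]
    [Module K V] {S W : Submodule K V} {u : V} (hS : S ≤ W) (hu : u ∉ W) :
    (S ⊔ K ∙ u) ⊓ W = S := by
  rw [sup_inf_assoc_of_le _ hS,
    disjoint_iff.mp (disjoint_span_singleton.mpr fun h => absurd h hu).symm, sup_bot_eq]

namespace MvPolynomial

variable {σ R : Type*} [CommSemiring R]

theorem IsHomogeneous.eval_smul {φ : MvPolynomial σ R} {m : ℕ}
    (hφ : φ.IsHomogeneous m) (c : R) (v : σ → R) :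
    eval (c • v) φ = c ^ m * eval v φ := by
  simp only [eval_eq, Finset.mul_sum, Pi.smul_apply, smul_eq_mul, mul_pow,
    Finset.prod_mul_distrib, Finset.prod_pow_eq_pow_sum]
  refine Finset.sum_congr rfl fun d hd => ?_
  have hdeg : d.degree = m := by_contra fun h => mem_support_iff.mp hd (hφ.coeff_eq_zero h)
  rw [← Finsupp.degree_apply, hdeg]
  ring

variable [Fintype σ]

theorem linearIndependent_monomial_equivFunOnFinite :
    LinearIndependent R fun d : σ → ℕ => monomial (Finsupp.equivFunOnFinite.symm d) (1 : R) :=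
  (basisMonomials σ R).linearIndependent.comp _ Finsupp.equivFunOnFinite.symm.injective

theorem span_monomial_equivFunOnFinite (k : ℕ) :
    Submodule.span R ((fun d : σ → ℕ => monomial (Finsupp.equivFunOnFinite.symm d) (1 : R)) ''
      {d | ∑ i, d i = k}) = homogeneousSubmodule σ R k := by
  rw [homogeneousSubmodule_eq_finsupp_supported, ← restrictSupport, restrictSupport_eq_span,
    ← Set.image_image (fun d => monomial d (1 : R))]
  congr 2
  ext d
  simp [Finsupp.degree_eq_sum]

end MvPolynomial


namespace ProjPts

variable {F : Type*} [Field F]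

theorem isStdRep_cons_iff {m : ℕ} {a : F} {w : Fin (m + 1) → F} :
    IsStdRep (Fin.cons a w : Fin (m + 2) → F) ↔ a = 1 ∨ a = 0 ∧ IsStdRep w := by
  constructor
  · rintro ⟨i, hlt, hi⟩
    cases i using Fin.cases with
    | zero => exact Or.inl hi
    | succ i =>
      exact Or.inr ⟨hlt 0 (Fin.succ_pos i),
        i, fun j hj => by simpa using hlt j.succ (Fin.succ_lt_succ_iff.mpr hj), hi⟩
  · rintro (rfl | ⟨rfl, i, hlt, hi⟩)
    · exact ⟨0, fun j hj => absurd hj (Fin.not_lt_zero j), rfl⟩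
    · refine ⟨i.succ, fun j hj => ?_, hi⟩
      cases j using Fin.cases with
      | zero => rfl
      | succ j => exact hlt j (Fin.succ_lt_succ_iff.mp hj)

def last (n : ℕ) : ProjPts F n :=
  ⟨Pi.single (Fin.last n) 1, Fin.last n, fun _ hj => Pi.single_eq_of_ne hj.ne _,
    Pi.single_eq_same _ _⟩

def monomial {n : ℕ} (d : Fin (n + 1) → ℕ) (p : ProjPts F n) : F :=
  ∏ i, p.1 i ^ d i

instance : Subsingleton (ProjPts F 0) :=
  ⟨fun ⟨v, i, _, hv⟩ ⟨w, j, _, hw⟩ => by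
    obtain rfl := Fin.fin_one_eq_zero i
    obtain rfl := Fin.fin_one_eq_zero j
    exact Subtype.ext (funext fun l => by
      obtain rfl := Fin.fin_one_eq_zero l
      exact hv.trans hw.symm)⟩

theorem cons_zero_last (m : ℕ) :
    (Fin.cons 0 (last m : ProjPts F m).1 : Fin (m + 2) → F) = (last (m + 1)).1 := by
  ext i
  cases i using Fin.cases with
  | zero => simp [last]
  | succ i => simp [last, Pi.single_apply]

open scoped Classical in
noncomputable def succEquiv (m : ℕ) :
    ProjPts F (m + 1) ≃ (Fin (m + 1) → F) ⊕ ProjPts F m where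
  toFun p :=
    if h : p.1 0 = 1 then Sum.inl (Fin.tail p.1)
    else Sum.inr ⟨Fin.tail p.1, by
      have hp := p.2
      rw [← Fin.cons_self_tail p.1, isStdRep_cons_iff] at hp
      exact (hp.resolve_left h).2⟩
  invFun
    | Sum.inl w => ⟨Fin.cons 1 w, isStdRep_cons_iff.mpr (Or.inl rfl)⟩
    | Sum.inr p => ⟨Fin.cons 0 p.1, isStdRep_cons_iff.mpr (Or.inr ⟨rfl, p.2⟩)⟩
  left_inv p := by
    have hp := p.2
    rw [← Fin.cons_self_tail p.1, isStdRep_cons_iff] at hp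
    by_cases h : p.1 0 = 1
    · simp only [h, dif_pos]
      refine Subtype.ext (?_ : Fin.cons 1 (Fin.tail p.1) = p.1)
      rw [← h, Fin.cons_self_tail]
    · simp only [h, dif_neg, not_false_iff]
      refine Subtype.ext (?_ : Fin.cons 0 (Fin.tail p.1) = p.1)
      rw [← (hp.resolve_left h).1, Fin.cons_self_tail]
  right_inv
    | Sum.inl w => by simp
    | Sum.inr p => by simp

theorem exists_eq_smul {n : ℕ} (v : Fin (n + 1) → F) :
    ∃ (c : F) (p : ProjPts F n), v = c • p.1 := by
  by_cases hv : v = 0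
  · exact ⟨0, last n, by rw [hv, zero_smul]⟩
  obtain ⟨i, hi, hmin⟩ := WellFounded.has_min wellFounded_lt {i | v i ≠ 0}
    (Function.ne_iff.mp hv)
  have hvi : v i ≠ 0 := hi
  refine ⟨v i, ⟨(v i)⁻¹ • v, i, fun j hj => ?_, inv_mul_cancel₀ hvi⟩, ?_⟩
  · simp [not_not.mp fun h => hmin j h hj]
  · rw [smul_smul, mul_inv_cancel₀ hvi, one_smul]

theorem sum_monomial [Fintype F] {n : ℕ} (d : Fin (n + 1) → ℕ)
    (hd : ∀ i, d i < Fintype.card F - 1) :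
    ∑ p : ProjPts F n, monomial d p = monomial d (last n) := by
  unfold monomial
  induction n with
  | zero => exact Fintype.sum_subsingleton _ _
  | succ m ih =>
    have hcons (a : F) (w : Fin (m + 1) → F) :
        ∏ i, (Fin.cons a w : Fin (m + 2) → F) i ^ d i = a ^ d 0 * ∏ j, w j ^ d j.succ := by
      simp [Fin.prod_univ_succ]
    -- On the chart `x₀ = 1` the sum factors, and `∑ x, x ^ e = 0` for `e < q - 1`.
    have hchart : ∑ w : Fin (m + 1) → F, ∏ j, w j ^ d j.succ = 0 := by
      rw [← Fintype.prod_sum fun (j : Fin (m + 1)) (x : F) => x ^ d j.succ]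
      exact Finset.prod_eq_zero (Finset.mem_univ 0)
        (FiniteField.sum_pow_lt_card_sub_one _ _ (hd _))
    rw [← (succEquiv m).symm.sum_comp, Fintype.sum_sum_type]
    simp only [succEquiv, Equiv.coe_fn_symm_mk, hcons, one_pow, one_mul, hchart,
      ← Finset.mul_sum, ih (fun j => d j.succ) (fun j => hd _), zero_add]
    rw [← hcons, cons_zero_last]

end ProjPts

section Evaluation

variable {F : Type*} [Field F] [Fintype F]

open MvPolynomial

theorem evalOnPts_apply {n : ℕ} (f : MvPolynomial (Fin (n + 1)) F) (p : ProjPts F n) :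
    evalOnPts F n f p = eval p.1 f := rfl

theorem sum_projPts_eval {n : ℕ} (h : MvPolynomial (Fin (n + 1)) F)
    (hh : h.totalDegree < Fintype.card F - 1) :
    ∑ p : ProjPts F n, eval p.1 h = eval (ProjPts.last n : ProjPts F n).1 h := by
  simp only [eval_eq', Finset.sum_comm (γ := ProjPts F n), ← Finset.mul_sum]
  exact Finset.sum_congr rfl fun d hd => congrArg _ <| ProjPts.sum_monomial d fun i =>
    ((Finsupp.le_degree i d).trans (le_totalDegree hd)).trans_lt hh

theorem disjoint_homogeneousSubmodule_ker_evalOnPts {n k : ℕ} (hk : k ≤ Fintype.card F) :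
    Disjoint (homogeneousSubmodule (Fin (n + 1)) F k) (LinearMap.ker (evalOnPts F n)) := by
  refine Submodule.disjoint_def.mpr fun f hf hker => ?_
  refine hf.eq_zero_of_forall_eval_eq_zero_of_le_card (fun v => ?_)
    (by rwa [Cardinal.mk_fintype, Nat.cast_le])
  obtain ⟨c, p, rfl⟩ := ProjPts.exists_eq_smul v
  rw [hf.eval_smul, ← evalOnPts_apply, LinearMap.mem_ker.mp hker, Pi.zero_apply, mul_zero]

end Evaluation

section Code

variable {F : Type*} [Field F] [Fintype F]

open MvPolynomial

theorem mem_dualCode {n : ℕ} {C : Submodule F (ProjPts F n → F)} {y : ProjPts F n → F} :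
    y ∈ dualCode C ↔ ∀ c ∈ C, ∑ p : ProjPts F n, y p * c p = 0 := Iff.rfl

theorem sum_mul_eq_of_mem_PRM {n k : ℕ} (hk : 2 * k < Fintype.card F - 1)
    {c c' : ProjPts F n → F} (hc : c ∈ PRM F n k) (hc' : c' ∈ PRM F n k) :
    ∑ p, c p * c' p = c (ProjPts.last n) * c' (ProjPts.last n) := by
  obtain ⟨f, hf, rfl⟩ := Submodule.mem_map.mp hc
  obtain ⟨g, hg, rfl⟩ := Submodule.mem_map.mp hc'
  have hfg : (f * g).totalDegree < Fintype.card F - 1 :=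
    (totalDegree_mul f g).trans_lt <| (add_le_add hf.totalDegree_le hg.totalDegree_le).trans_lt
      (by omega)
  simpa only [evalOnPts_apply, map_mul] using sum_projPts_eval (f * g) hfg

theorem inf_dualCode_eq_inf_ker_proj {n : ℕ} {C : Submodule F (ProjPts F n → F)}
    {p₀ : ProjPts F n} (hpair : ∀ c ∈ C, ∀ c' ∈ C, ∑ p, c p * c' p = c p₀ * c' p₀)
    {u : ProjPts F n → F} (hu : u ∈ C) (hu₀ : u p₀ ≠ 0) :
    C ⊓ dualCode C = C ⊓ LinearMap.ker (LinearMap.proj p₀) := by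
  ext c
  simp only [Submodule.mem_inf, mem_dualCode, LinearMap.mem_ker, LinearMap.proj_apply]
  refine and_congr_right fun hc => ⟨fun hdual => ?_, fun hc₀ c' hc' => ?_⟩
  · have := hdual u hu
    rw [hpair c hc u hu] at this
    exact (mul_eq_zero.mp this).resolve_right hu₀
  · rw [hpair c hc c' hc', hc₀, zero_mul]

end Code

section Monomials

variable {F : Type*} [Field F] [Fintype F] {n k : ℕ}

theorem ProjPts.monomial_eq_evalOnPts_comp :
    (monomial : (Fin (n + 1) → ℕ) → ProjPts F n → F) =
      evalOnPts F n ∘ fun d => MvPolynomial.monomial (Finsupp.equivFunOnFinite.symm d) 1 := by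
  ext d p
  simp [monomial, evalOnPts_apply, MvPolynomial.eval_monomial, Finsupp.prod_fintype]

theorem span_monomial_eq_PRM :
    Submodule.span F (ProjPts.monomial '' {d | ∑ i, d i = k}) = PRM F n k := by
  rw [ProjPts.monomial_eq_evalOnPts_comp, Set.image_comp, Submodule.span_image,
    MvPolynomial.span_monomial_equivFunOnFinite]
  rfl

theorem linearIndepOn_monomial (hk : k ≤ Fintype.card F) :
    LinearIndepOn F (ProjPts.monomial : _ → ProjPts F n → F) {d | ∑ i, d i = k} := by
  rw [ProjPts.monomial_eq_evalOnPts_comp]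
  refine (MvPolynomial.linearIndependent_monomial_equivFunOnFinite.linearIndepOn _).map_injOn _
    (LinearMap.injOn_of_disjoint_ker ?_ (disjoint_homogeneousSubmodule_ker_evalOnPts hk))
  rw [MvPolynomial.span_monomial_equivFunOnFinite]

theorem finrank_PRM (hk : k ≤ Fintype.card F) :
    Module.finrank F (PRM F n k) = (n + k).choose k := by
  rw [← span_monomial_eq_PRM, Set.image_eq_range,
    Module.finrank_eq_nat_card_basis (Module.Basis.span (linearIndepOn_monomial hk))]
  calc Nat.card _ = Nat.card (Sym (Fin (n + 1)) k) :=
        Nat.card_congr (Sym.equivNatSumOfFintype _ k).symm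
    _ = (n + k).choose k := by
      rw [Sym.natCard_sym_eq_choose, Nat.card_fin, Nat.add_right_comm, Nat.add_sub_cancel]

end Monomials

def lastExponent (n k : ℕ) : Fin (n + 1) → ℕ :=
  fun i => if i = Fin.last n then k else 0

section Hull

variable {F : Type*} [Field F] {n k : ℕ}

theorem exists_ne_last_ne_zero {d : Fin (n + 1) → ℕ} (hsum : ∑ i, d i = k)
    (hne : d ≠ lastExponent n k) : ∃ j ≠ Fin.last n, d j ≠ 0 := by
  by_contra! h
  refine hne (funext fun i => ?_)
  unfold lastExponent
  split_ifs with hi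
  · rw [hi, ← hsum, Fintype.sum_eq_single _ h]
  · exact h i hi

theorem span_monomial_le_ker_proj_last :
    Submodule.span F (ProjPts.monomial (F := F) '' ({d | ∑ i, d i = k} \ {lastExponent n k})) ≤
      LinearMap.ker (LinearMap.proj (ProjPts.last n)) := by
  rw [Submodule.span_le]
  rintro _ ⟨d, ⟨hsum, hne⟩, rfl⟩
  obtain ⟨j, hj, hdj⟩ := exists_ne_last_ne_zero hsum hne
  exact Finset.prod_eq_zero (Finset.mem_univ j)
    (by simp [ProjPts.last, Pi.single_eq_of_ne hj, zero_pow hdj])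

theorem monomial_lastExponent_notMem_ker_proj_last :
    ProjPts.monomial (F := F) (lastExponent n k) ∉
      LinearMap.ker (LinearMap.proj (R := F) (ProjPts.last n)) := by
  rw [LinearMap.mem_ker, LinearMap.proj_apply, ProjPts.monomial, Finset.prod_eq_one fun i _ => by
    by_cases hi : i = Fin.last n <;> simp [ProjPts.last, lastExponent, hi]]
  exact one_ne_zero

theorem PRM_eq_span_sup_span_singleton [Fintype F] :
    PRM F n k =
      Submodule.span F (ProjPts.monomial '' ({d | ∑ i, d i = k} \ {lastExponent n k})) ⊔
        F ∙ ProjPts.monomial (lastExponent n k) := by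
  rw [← span_monomial_eq_PRM, sup_comm, ← Submodule.span_insert, ← Set.image_insert_eq,
    Set.insert_sdiff_singleton, Set.insert_eq_of_mem (by simp [lastExponent])]

theorem PRM_inf_dualCode [Fintype F] (hk : 2 * k < Fintype.card F - 1) :
    PRM F n k ⊓ dualCode (PRM F n k) =
      Submodule.span F (ProjPts.monomial '' ({d | ∑ i, d i = k} \ {lastExponent n k})) := by
  have hu : ProjPts.monomial (lastExponent n k) ∈ PRM F n k := by
    rw [PRM_eq_span_sup_span_singleton]
    exact Submodule.mem_sup_right (Submodule.mem_span_singleton_self _)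
  rw [inf_dualCode_eq_inf_ker_proj (fun _ hc _ hc' => sum_mul_eq_of_mem_PRM hk hc hc') hu
      monomial_lastExponent_notMem_ker_proj_last, PRM_eq_span_sup_span_singleton,
    Submodule.sup_span_singleton_inf_of_le span_monomial_le_ker_proj_last
      monomial_lastExponent_notMem_ker_proj_last]

end Hull

theorem stmt16_general (q n : ℕ) (F : Type*) [Field F] [Fintype F]
    (hq : Fintype.card F = q) (k : ℕ) (hkq : 2 * k + 1 < q) :
    (Module.finrank F ↥(PRM F n k ⊓ dualCode (PRM F n k)) : ℤ) =
        (Module.finrank F (PRM F n k) : ℤ) - 1 ∧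
    Module.finrank F (PRM F n k) = (n + k).choose k ∧
    LinearIndependent F
      (fun d : {d : Fin (n + 1) → ℕ //
          (∑ i, d i) = k ∧ d ≠ fun i => if i = Fin.last n then k else 0} =>
        (fun p : ProjPts F n => ∏ i, p.1 i ^ d.1 i)) ∧
    Submodule.span F
      (Set.range (fun d : {d : Fin (n + 1) → ℕ //
          (∑ i, d i) = k ∧ d ≠ fun i => if i = Fin.last n then k else 0} =>
        (fun p : ProjPts F n => ∏ i, p.1 i ^ d.1 i)))
      = PRM F n k ⊓ dualCode (PRM F n k) := by
  have hk : 2 * k < Fintype.card F - 1 := by omega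
  refine ⟨?_, finrank_PRM (by omega),
    (linearIndepOn_monomial (by omega)).mono Set.sdiff_subset, ?_⟩
  · rw [PRM_inf_dualCode hk, PRM_eq_span_sup_span_singleton,
      Submodule.finrank_sup_span_singleton fun h =>
        monomial_lastExponent_notMem_ker_proj_last (span_monomial_le_ker_proj_last h)]
    push_cast
    ring
  · rw [PRM_inf_dualCode hk, Set.image_eq_range]
    rfl

theorem stmt16 (q n : ℕ) (F : Type*) [Field F] [Fintype F] [DecidableEq F]
    (hq : Fintype.card F = q) (hn : 1 ≤ n) (k : ℕ) (hk1 : 1 ≤ k) (hkq : 2 * k + 1 < q) :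
    (Module.finrank F ↥(PRM F n k ⊓ dualCode (PRM F n k)) : ℤ) =
        (Module.finrank F (PRM F n k) : ℤ) - 1 ∧
    Module.finrank F (PRM F n k) = (n + k).choose k ∧
    LinearIndependent F
      (fun d : {d : Fin (n + 1) → ℕ //
          (∑ i, d i) = k ∧ d ≠ fun i => if i = Fin.last n then k else 0} =>
        (fun p : ProjPts F n => ∏ i, p.1 i ^ d.1 i)) ∧
    Submodule.span F
      (Set.range (fun d : {d : Fin (n + 1) → ℕ //
          (∑ i, d i) = k ∧ d ≠ fun i => if i = Fin.last n then k else 0} =>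
        (fun p : ProjPts F n => ∏ i, p.1 i ^ d.1 i)))
      = PRM F n k ⊓ dualCode (PRM F n k) :=
  stmt16_general q n F hq k hkq
end
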